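/- arXiv:1401.7043 — 14 statements merged into one kernel-verified Lean document; each statement's English description precedes it below -/
import Mathlib

section
/- Let M ∈ 𝓕 be any feasible solution minimizing the total cost under the scenario-averaged costs, i.e., M minimizes ∑_{e∈T} (1/k) ∑_{S∈𝓢} c^S_e over T ∈ 𝓕. Then (1/k) ∑_{S∈𝓢} (F(M,c^S) − F*(c^S)) ≤ Z_R. -/
open Finset

/-- If `M ∈ 𝓕` minimizes the scenario-averaged cost, then
`(1/k) ∑_{S∈𝓢} (F(M,c^S) − F*(c^S)) ≤ Z_R`. -/
theorem mean_cost_solution_lower_bounds_ZR_discrete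
    {E : Type*} [Fintype E] [DecidableEq E] [Nonempty E]
    {S : Type*} [Fintype S] [Nonempty S]
    (𝓕 : Finset (Finset E)) (h𝓕 : 𝓕.Nonempty)
    (c : S → E → ℝ)
    (k : ℕ) (hk : k = Fintype.card S)
    (M : Finset E) (hM : M ∈ 𝓕)
    (hMmin : ∀ T ∈ 𝓕,
      (∑ e ∈ M, (1 / (k : ℝ)) * ∑ s, c s e) ≤ ∑ e ∈ T, (1 / (k : ℝ)) * ∑ s, c s e) :
    (1 / (k : ℝ)) * ∑ s, ((∑ e ∈ M, c s e) - 𝓕.inf' h𝓕 (fun T => ∑ e ∈ T, c s e))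
    ≤
    (⨅ p : (convexHull ℝ
        {x : E → ℝ | ∃ T ∈ 𝓕, x = fun e => if e ∈ T then (1 : ℝ) else 0} : Set (E → ℝ)),
      Finset.univ.sup' Finset.univ_nonempty (fun s : S =>
        (∑ e, c s e * p.1 e) - 𝓕.inf' h𝓕 (fun T => ∑ e ∈ T, c s e))) := by
  have hk0 : (0:ℝ) < (k:ℝ) := by
    have := Fintype.card_pos (α := S)
    rw [hk]; exact_mod_cast this
  set X : Set (E → ℝ) :=
    {x : E → ℝ | ∃ T ∈ 𝓕, x = fun e => if e ∈ T then (1 : ℝ) else 0} with hX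
  have hMX : (fun e => if e ∈ M then (1:ℝ) else 0) ∈ convexHull ℝ X :=
    subset_convexHull ℝ X ⟨M, hM, rfl⟩
  haveI : Nonempty (convexHull ℝ X : Set (E → ℝ)) := ⟨⟨_, hMX⟩⟩
  apply le_ciInf
  intro p
  set d : E → ℝ := fun e => ∑ s, c s e with hd
  -- M minimizes d over 𝓕 (cancel 1/k)
  have hMd : ∀ T ∈ 𝓕, (∑ e ∈ M, d e) ≤ ∑ e ∈ T, d e := by
    intro T hT
    have h := hMmin T hT
    rw [← Finset.mul_sum, ← Finset.mul_sum] at h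
    exact le_of_mul_le_mul_left h (by positivity)
  -- key: linear functional bound on the convex hull
  have hkey : (∑ e ∈ M, d e) ≤ ∑ e, d e * p.1 e := by
    have hlin : IsLinearMap ℝ (fun x : E → ℝ => ∑ e, d e * x e) := by
      constructor
      · intro x y; simp [mul_add, Finset.sum_add_distrib]
      · intro a x; simp [Finset.mul_sum, smul_eq_mul]; ring_nf
        exact Finset.sum_congr rfl fun e _ => by ring
    have hconv : Convex ℝ {x : E → ℝ | (∑ e ∈ M, d e) ≤ ∑ e, d e * x e} :=
      convex_halfSpace_ge hlin _
    have hXsub : X ⊆ {x : E → ℝ | (∑ e ∈ M, d e) ≤ ∑ e, d e * x e} := by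
      rintro x ⟨T, hT, rfl⟩
      have : (∑ e, d e * (if e ∈ T then (1:ℝ) else 0)) = ∑ e ∈ T, d e := by
        rw [Finset.sum_congr rfl (fun e _ => by rw [mul_ite, mul_one, mul_zero]),
          Finset.sum_ite_mem, Finset.univ_inter]
      simpa [this] using hMd T hT
    exact convexHull_min hXsub hconv p.2
  -- average ≤ sup
  have hsum : (∑ s, ((∑ e ∈ M, c s e) - 𝓕.inf' h𝓕 (fun T => ∑ e ∈ T, c s e)))
      ≤ ∑ s, ((∑ e, c s e * p.1 e) - 𝓕.inf' h𝓕 (fun T => ∑ e ∈ T, c s e)) := by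
    rw [Finset.sum_sub_distrib, Finset.sum_sub_distrib]
    apply sub_le_sub_right
    calc ∑ s, ∑ e ∈ M, c s e = ∑ e ∈ M, d e := Finset.sum_comm
      _ ≤ ∑ e, d e * p.1 e := hkey
      _ = ∑ s, ∑ e, c s e * p.1 e := by
          rw [Finset.sum_comm]
          exact Finset.sum_congr rfl fun e _ => by
            simp [hd, Finset.sum_mul]
  set B := Finset.univ.sup' Finset.univ_nonempty (fun s : S =>
      (∑ e, c s e * p.1 e) - 𝓕.inf' h𝓕 (fun T => ∑ e ∈ T, c s e)) with hB
  have hsup : (∑ s, ((∑ e, c s e * p.1 e) - 𝓕.inf' h𝓕 (fun T => ∑ e ∈ T, c s e)))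
      ≤ (k:ℝ) * B := by
    calc ∑ s, ((∑ e, c s e * p.1 e) - 𝓕.inf' h𝓕 (fun T => ∑ e ∈ T, c s e))
        ≤ ∑ _s : S, B :=
          Finset.sum_le_sum fun s _ => by rw [hB]; exact Finset.le_sup' (fun s : S => (∑ e, c s e * p.1 e) - 𝓕.inf' h𝓕 (fun T => ∑ e ∈ T, c s e)) (Finset.mem_univ s)
      _ = (k:ℝ) * B := by simp [hk, mul_comm]
  have : (1 / (k:ℝ)) * ∑ s, ((∑ e ∈ M, c s e) - 𝓕.inf' h𝓕 (fun T => ∑ e ∈ T, c s e))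
      ≤ (1 / (k:ℝ)) * ((k:ℝ) * B) := by
    apply mul_le_mul_of_nonneg_left (hsum.trans hsup) (by positivity)
  calc (1 / (k:ℝ)) * ∑ s, ((∑ e ∈ M, c s e) - 𝓕.inf' h𝓕 (fun T => ∑ e ∈ T, c s e))
      ≤ (1 / (k:ℝ)) * ((k:ℝ) * B) := this
    _ = B := by field_simp
end

section
/- Mean-cost solutions give a k-approximation for minmax regret under discrete scenario uncertainty: if M ∈ 𝓕 minimizes ∑_{e∈T} (1/k) ∑_{S∈𝓢} c^S_e over T ∈ 𝓕, then max_{S∈𝓢} (F(M,c^S) − F*(c^S)) ≤ k · Z_R; in particular, since Z_R ≤ Z_D, the maximum regret of M is at most k times the deterministic minmax regret Z_D. -/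
open Finset

/-- Mean-cost solutions give a k-approximation for minmax regret under
discrete scenario uncertainty: the maximum regret of `M` is at most `k · Z_R`, and in
particular at most `k · Z_D`. -/
theorem mean_cost_k_approximation_discrete
    {E : Type*} [Fintype E] [DecidableEq E] [Nonempty E]
    {S : Type*} [Fintype S] [Nonempty S]
    (𝓕 : Finset (Finset E)) (h𝓕 : 𝓕.Nonempty)
    (c : S → E → ℝ)
    (k : ℕ) (hk : k = Fintype.card S)
    (M : Finset E) (hM : M ∈ 𝓕)
    (hMmin : ∀ T ∈ 𝓕,
      (∑ e ∈ M, (1 / (k : ℝ)) * ∑ s, c s e) ≤ ∑ e ∈ T, (1 / (k : ℝ)) * ∑ s, c s e) :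
    (Finset.univ.sup' Finset.univ_nonempty (fun s : S =>
        (∑ e ∈ M, c s e) - 𝓕.inf' h𝓕 (fun T => ∑ e ∈ T, c s e)))
      ≤ (k : ℝ) *
        (⨅ p : (convexHull ℝ
            {x : E → ℝ | ∃ T ∈ 𝓕, x = fun e => if e ∈ T then (1 : ℝ) else 0} : Set (E → ℝ)),
          Finset.univ.sup' Finset.univ_nonempty (fun s : S =>
            (∑ e, c s e * p.1 e) - 𝓕.inf' h𝓕 (fun T => ∑ e ∈ T, c s e)))
    ∧
    (Finset.univ.sup' Finset.univ_nonempty (fun s : S =>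
        (∑ e ∈ M, c s e) - 𝓕.inf' h𝓕 (fun T => ∑ e ∈ T, c s e)))
      ≤ (k : ℝ) *
        𝓕.inf' h𝓕 (fun T =>
          Finset.univ.sup' Finset.univ_nonempty (fun s : S =>
            (∑ e ∈ T, c s e) - 𝓕.inf' h𝓕 (fun T' => ∑ e ∈ T', c s e))) := by
  classical
  set R : S → ℝ := fun s => 𝓕.inf' h𝓕 (fun T => ∑ e ∈ T, c s e) with hR
  have hk0 : 0 < (k : ℝ) := by
    have : 0 < k := by rw [hk]; exact Fintype.card_pos
    exact_mod_cast this
  -- the linear functional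
  set L : (E → ℝ) → ℝ := fun x => ∑ s, ∑ e, c s e * x e with hL
  have hLlin : IsLinearMap ℝ L := by
    constructor
    · intro x y
      simp [hL, mul_add, Finset.sum_add_distrib]
    · intro a x
      simp [hL, Finset.mul_sum, mul_comm, mul_left_comm]
  -- sum of M's costs is a lower bound for L on vertices
  have hMsum : ∀ T ∈ 𝓕, ∑ s, ∑ e ∈ M, c s e ≤ ∑ s, ∑ e ∈ T, c s e := by
    intro T hT
    have h := hMmin T hT
    have h1 : (1 / (k : ℝ)) * ∑ e ∈ M, ∑ s, c s e ≤ (1 / (k : ℝ)) * ∑ e ∈ T, ∑ s, c s e := by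
      simpa [Finset.mul_sum] using h
    have h2 : ∑ e ∈ M, ∑ s, c s e ≤ ∑ e ∈ T, ∑ s, c s e :=
      le_of_mul_le_mul_left h1 (by positivity)
    calc ∑ s, ∑ e ∈ M, c s e = ∑ e ∈ M, ∑ s, c s e := Finset.sum_comm
      _ ≤ ∑ e ∈ T, ∑ s, c s e := h2
      _ = ∑ s, ∑ e ∈ T, c s e := Finset.sum_comm
  -- L on the hull is at least ∑ s F(M, c s)
  have hhull : ∀ p ∈ (convexHull ℝ
      {x : E → ℝ | ∃ T ∈ 𝓕, x = fun e => if e ∈ T then (1 : ℝ) else 0}),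
      ∑ s, ∑ e ∈ M, c s e ≤ L p := by
    have hconv : Convex ℝ {x : E → ℝ | ∑ s, ∑ e ∈ M, c s e ≤ L x} :=
      convex_halfSpace_ge hLlin _
    have hsub : {x : E → ℝ | ∃ T ∈ 𝓕, x = fun e => if e ∈ T then (1 : ℝ) else 0} ⊆
        {x : E → ℝ | ∑ s, ∑ e ∈ M, c s e ≤ L x} := by
      rintro x ⟨T, hT, rfl⟩
      have : L (fun e => if e ∈ T then (1 : ℝ) else 0) = ∑ s, ∑ e ∈ T, c s e := by
        simp [hL, mul_ite, mul_one, mul_zero, Finset.sum_ite_mem, Finset.univ_inter]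
      simpa [this] using hMsum T hT
    intro p hp
    exact convexHull_min hsub hconv hp
  -- max regret of M ≤ sum of regrets of M
  have hRle : ∀ s : S, R s ≤ ∑ e ∈ M, c s e := fun s =>
    Finset.inf'_le _ hM
  have hstep1 : (Finset.univ.sup' Finset.univ_nonempty (fun s : S =>
      (∑ e ∈ M, c s e) - R s)) ≤ ∑ s, ((∑ e ∈ M, c s e) - R s) := by
    apply Finset.sup'_le
    intro s _
    apply Finset.single_le_sum (f := fun s => (∑ e ∈ M, c s e) - R s)
      (fun t _ => sub_nonneg.mpr (hRle t)) (Finset.mem_univ s)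
  -- key inequality: for every p in the hull
  have key : ∀ p ∈ (convexHull ℝ
      {x : E → ℝ | ∃ T ∈ 𝓕, x = fun e => if e ∈ T then (1 : ℝ) else 0}),
      (Finset.univ.sup' Finset.univ_nonempty (fun s : S =>
        (∑ e ∈ M, c s e) - R s))
      ≤ (k : ℝ) * (Finset.univ.sup' Finset.univ_nonempty (fun s : S =>
        (∑ e, c s e * p e) - R s)) := by
    intro p hp
    have h2 : ∑ s, ((∑ e ∈ M, c s e) - R s) ≤ ∑ s, ((∑ e, c s e * p e) - R s) := by
      rw [Finset.sum_sub_distrib, Finset.sum_sub_distrib]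
      exact sub_le_sub_right (hhull p hp) _
    have h3 : ∑ s, ((∑ e, c s e * p e) - R s)
        ≤ (k : ℝ) * (Finset.univ.sup' Finset.univ_nonempty (fun s : S =>
          (∑ e, c s e * p e) - R s)) := by
      have := Finset.sum_le_card_nsmul Finset.univ
        (fun s : S => (∑ e, c s e * p e) - R s)
        (Finset.univ.sup' Finset.univ_nonempty (fun s : S => (∑ e, c s e * p e) - R s))
        (fun s _ => Finset.le_sup' (fun s : S => (∑ e, c s e * p e) - R s) (Finset.mem_univ s))
      simpa [hk, nsmul_eq_mul] using this
    exact hstep1.trans (h2.trans h3)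
  constructor
  · -- infimum part
    have hne : Nonempty (convexHull ℝ
        {x : E → ℝ | ∃ T ∈ 𝓕, x = fun e => if e ∈ T then (1 : ℝ) else 0} : Set (E → ℝ)) := by
      refine ⟨⟨fun e => if e ∈ M then (1 : ℝ) else 0, ?_⟩⟩
      exact subset_convexHull ℝ _ ⟨M, hM, rfl⟩
    rw [mul_comm, ← div_le_iff₀ hk0]
    apply le_ciInf
    intro p
    rw [div_le_iff₀ hk0, mul_comm]
    exact key p.1 p.2
  · -- deterministic part
    obtain ⟨T₀, hT₀, hTeq⟩ := Finset.exists_mem_eq_inf' h𝓕 (fun T =>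
      Finset.univ.sup' Finset.univ_nonempty (fun s : S =>
        (∑ e ∈ T, c s e) - R s))
    rw [hTeq]
    have hmem : (fun e => if e ∈ T₀ then (1 : ℝ) else 0) ∈ convexHull ℝ
        {x : E → ℝ | ∃ T ∈ 𝓕, x = fun e => if e ∈ T then (1 : ℝ) else 0} :=
      subset_convexHull ℝ _ ⟨T₀, hT₀, rfl⟩
    have := key _ hmem
    simpa [mul_ite, mul_one, mul_zero, Finset.sum_ite_mem, Finset.univ_inter] using this
end

section
/- For discrete scenario uncertainty with k scenarios, the randomized minmax regret is at least a 1/k fraction of the deterministic minmax regret: Z_R ≥ Z_D / k. -/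
open Finset

/-- For discrete scenario uncertainty with `k` scenarios, `Z_R ≥ Z_D / k`. -/
theorem ZR_ge_ZD_div_k_discrete
    {E : Type*} [Fintype E] [DecidableEq E] [Nonempty E]
    {S : Type*} [Fintype S] [Nonempty S]
    (𝓕 : Finset (Finset E)) (h𝓕 : 𝓕.Nonempty)
    (c : S → E → ℝ)
    (k : ℕ) (hk : k = Fintype.card S) :
    (⨅ p : (convexHull ℝ
        {x : E → ℝ | ∃ T ∈ 𝓕, x = fun e => if e ∈ T then (1 : ℝ) else 0} : Set (E → ℝ)),
      Finset.univ.sup' Finset.univ_nonempty (fun s : S =>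
        (∑ e, c s e * p.1 e) - 𝓕.inf' h𝓕 (fun T => ∑ e ∈ T, c s e)))
    ≥
    (𝓕.inf' h𝓕 (fun T =>
      Finset.univ.sup' Finset.univ_nonempty (fun s : S =>
        (∑ e ∈ T, c s e) - 𝓕.inf' h𝓕 (fun T' => ∑ e ∈ T', c s e)))) / (k : ℝ) := by
  have hkpos : 0 < (k : ℝ) := by
    rw [hk]; exact_mod_cast Fintype.card_pos
  obtain ⟨T₀, hT₀⟩ := h𝓕
  have hne : Nonempty (convexHull ℝ
      {x : E → ℝ | ∃ T ∈ 𝓕, x = fun e => if e ∈ T then (1 : ℝ) else 0} : Set (E → ℝ)) :=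
    ⟨⟨_, subset_convexHull ℝ _ ⟨T₀, hT₀, rfl⟩⟩⟩
  rw [ge_iff_le]
  apply le_ciInf
  rintro ⟨p, hp⟩
  rw [div_le_iff₀ hkpos]
  dsimp only
  set F : S → ℝ := fun s => 𝓕.inf' ⟨T₀, hT₀⟩ (fun T' => ∑ e ∈ T', c s e) with hF
  set M : ℝ := Finset.univ.sup' Finset.univ_nonempty
      (fun s : S => (∑ e, c s e * p e) - F s) with hM
  -- linearity of the aggregate objective
  have hlin : IsLinearMap ℝ (fun x : E → ℝ => ∑ e, (∑ s, c s e) * x e) := by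
    constructor
    · intro x y
      simp [mul_add, Finset.sum_add_distrib]
    · intro a x
      simp [Finset.mul_sum, mul_left_comm]
  -- a minimizer of the aggregate cost
  obtain ⟨T₁, hT₁mem, hT₁⟩ :=
    Finset.exists_mem_eq_inf' ⟨T₀, hT₀⟩ (fun T => ∑ s, ∑ e ∈ T, c s e)
  -- the aggregate cost of p is at least the minimum over 𝓕
  have hb : ∑ s, ∑ e ∈ T₁, c s e ≤ ∑ e, (∑ s, c s e) * p e := by
    have hsub : convexHull ℝ {x : E → ℝ | ∃ T ∈ 𝓕, x = fun e => if e ∈ T then (1 : ℝ) else 0}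
        ⊆ {x | ∑ s, ∑ e ∈ T₁, c s e ≤ ∑ e, (∑ s, c s e) * x e} := by
      apply convexHull_min
      · rintro x ⟨T, hT, rfl⟩
        show ∑ s, ∑ e ∈ T₁, c s e ≤ ∑ e, (∑ s, c s e) * (if e ∈ T then (1 : ℝ) else 0)
        have heq : (∑ e, (∑ s, c s e) * (if e ∈ T then (1 : ℝ) else 0))
            = ∑ s, ∑ e ∈ T, c s e := by
          simp only [mul_ite, mul_one, mul_zero, Finset.sum_ite_mem, Finset.univ_inter]
          exact Finset.sum_comm
        rw [heq, ← hT₁]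
        exact Finset.inf'_le _ hT
      · exact convex_halfSpace_ge hlin _
    exact hsub hp
  -- each scenario regret for T₁ is nonnegative
  have hnn : ∀ s : S, 0 ≤ (∑ e ∈ T₁, c s e) - F s := fun s =>
    sub_nonneg.2 (Finset.inf'_le _ hT₁mem)
  -- ZD ≤ sup' over s of T₁ regrets
  have h1 : 𝓕.inf' ⟨T₀, hT₀⟩ (fun T =>
      Finset.univ.sup' Finset.univ_nonempty (fun s : S => (∑ e ∈ T, c s e) - F s))
      ≤ Finset.univ.sup' Finset.univ_nonempty (fun s : S => (∑ e ∈ T₁, c s e) - F s) :=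
    Finset.inf'_le _ hT₁mem
  -- sup' ≤ sum of nonneg terms
  have h2 : Finset.univ.sup' Finset.univ_nonempty (fun s : S => (∑ e ∈ T₁, c s e) - F s)
      ≤ ∑ s, ((∑ e ∈ T₁, c s e) - F s) := by
    apply Finset.sup'_le
    intro s _
    exact Finset.single_le_sum (fun t _ => hnn t) (Finset.mem_univ s)
  -- sum of T₁ regrets ≤ sum of p regrets
  have h3 : ∑ s, ((∑ e ∈ T₁, c s e) - F s) ≤ ∑ s, ((∑ e, c s e * p e) - F s) := by
    rw [Finset.sum_sub_distrib, Finset.sum_sub_distrib]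
    apply sub_le_sub_right
    calc ∑ s, ∑ e ∈ T₁, c s e ≤ ∑ e, (∑ s, c s e) * p e := hb
      _ = ∑ s, ∑ e, c s e * p e := by
          rw [Finset.sum_comm]
          congr 1; ext e
          rw [Finset.sum_mul]
  -- sum of p regrets ≤ k * M
  have h4 : ∑ s, ((∑ e, c s e * p e) - F s) ≤ M * k := by
    calc ∑ s, ((∑ e, c s e * p e) - F s) ≤ ∑ _s : S, M :=
          Finset.sum_le_sum (fun s _ => Finset.le_sup' (fun s : S => (∑ e, c s e * p e) - F s) (Finset.mem_univ s))
      _ = M * k := by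
          rw [Finset.sum_const, Finset.card_univ, ← hk, nsmul_eq_mul, mul_comm]
  exact le_trans h1 (le_trans h2 (le_trans h3 h4))
end

section
/- For interval uncertainty, the maximum regret of a feasible solution T' ∈ 𝓕 admits the combinatorial expression: sup_{c∈𝓘} (F(T',c) − F*(c)) = max_{T∈𝓕} ( ∑_{e ∈ T' ∖ T} c^+_e − ∑_{e ∈ T ∖ T'} c^-_e ). -/
open Finset

/-- Under interval uncertainty, the maximum regret of a feasible solution `T'`
admits the combinatorial expression
`sup_{c∈𝓘} (F(T',c) − F*(c)) = max_{T∈𝓕} (∑_{e∈T'∖T} c⁺_e − ∑_{e∈T∖T'} c⁻_e)`. -/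
theorem max_regret_combinatorial_interval
    {E : Type*} [Fintype E] [DecidableEq E] [Nonempty E]
    (𝓕 : Finset (Finset E)) (h𝓕 : 𝓕.Nonempty)
    (cm cp : E → ℝ) (hI : ∀ e, cm e ≤ cp e)
    (T' : Finset E) (hT' : T' ∈ 𝓕) :
    (⨆ c : {c : E → ℝ // ∀ e, cm e ≤ c e ∧ c e ≤ cp e},
      (∑ e ∈ T', c.1 e) - 𝓕.inf' h𝓕 (fun T => ∑ e ∈ T, c.1 e))
    =
    𝓕.sup' h𝓕 (fun T => (∑ e ∈ T' \ T, cp e) - ∑ e ∈ T \ T', cm e) := by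
  set R := 𝓕.sup' h𝓕 (fun T => (∑ e ∈ T' \ T, cp e) - ∑ e ∈ T \ T', cm e) with hR
  have hub : ∀ c : {c : E → ℝ // ∀ e, cm e ≤ c e ∧ c e ≤ cp e},
      (∑ e ∈ T', c.1 e) - 𝓕.inf' h𝓕 (fun T => ∑ e ∈ T, c.1 e) ≤ R := by
    intro c
    obtain ⟨T, hT, hval⟩ := 𝓕.exists_mem_eq_inf' h𝓕 (fun T => ∑ e ∈ T, c.1 e)
    rw [hval]
    calc (∑ e ∈ T', c.1 e) - ∑ e ∈ T, c.1 e
        = (∑ e ∈ T' \ T, c.1 e) - ∑ e ∈ T \ T', c.1 e := by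
          rw [Finset.sum_sdiff_sub_sum_sdiff]
      _ ≤ (∑ e ∈ T' \ T, cp e) - ∑ e ∈ T \ T', cm e := by
          gcongr with e he e he
          · exact (c.2 e).2
          · exact (c.2 e).1
      _ ≤ R := Finset.le_sup' (fun T => (∑ e ∈ T' \ T, cp e) - ∑ e ∈ T \ T', cm e) hT
  haveI : Nonempty {c : E → ℝ // ∀ e, cm e ≤ c e ∧ c e ≤ cp e} :=
    ⟨⟨cm, fun e => ⟨le_rfl, hI e⟩⟩⟩
  have hbdd : BddAbove (Set.range fun c : {c : E → ℝ // ∀ e, cm e ≤ c e ∧ c e ≤ cp e} =>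
      (∑ e ∈ T', c.1 e) - 𝓕.inf' h𝓕 (fun T => ∑ e ∈ T, c.1 e)) :=
    ⟨R, by rintro _ ⟨c, rfl⟩; exact hub c⟩
  apply le_antisymm (ciSup_le hub)
  obtain ⟨T, hT, hval⟩ := 𝓕.exists_mem_eq_sup' h𝓕
    (fun T => (∑ e ∈ T' \ T, cp e) - ∑ e ∈ T \ T', cm e)
  have hc : ∀ e, cm e ≤ (fun e => if e ∈ T' then cp e else cm e) e ∧
      (fun e => if e ∈ T' then cp e else cm e) e ≤ cp e := by
    intro e; dsimp only; split <;> simp [hI e]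
  set c : {c : E → ℝ // ∀ e, cm e ≤ c e ∧ c e ≤ cp e} := ⟨_, hc⟩ with hcdef
  have h1 : 𝓕.inf' h𝓕 (fun T => ∑ e ∈ T, c.1 e) ≤ ∑ e ∈ T, c.1 e :=
    Finset.inf'_le _ hT
  have h2 : (∑ e ∈ T' \ T, cp e) - ∑ e ∈ T \ T', cm e
      ≤ (∑ e ∈ T', c.1 e) - 𝓕.inf' h𝓕 (fun T => ∑ e ∈ T, c.1 e) := by
    have : (∑ e ∈ T' \ T, cp e) - ∑ e ∈ T \ T', cm e
        = (∑ e ∈ T', c.1 e) - ∑ e ∈ T, c.1 e := by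
      rw [← Finset.sum_sdiff_sub_sum_sdiff]
      congr 1
      · exact Finset.sum_congr rfl fun e he => by
          simp [hcdef, (Finset.mem_sdiff.mp he).1]
      · exact Finset.sum_congr rfl fun e he => by
          simp [hcdef, (Finset.mem_sdiff.mp he).2]
    rw [this]
    linarith
  rw [hR, hval]
  exact h2.trans (le_ciSup hbdd c)
end

section
/- For interval uncertainty and any vector p ∈ ℝ^E with 0 ≤ p_e ≤ 1 for all e, the maximum expected regret satisfies sup_{c∈𝓘} ( ∑_{e∈E} c_e p_e − F*(c) ) = max_{T∈𝓕} ( ∑_{e ∈ E∖T} c^+_e p_e − ∑_{e∈T} c^-_e (1 − p_e) ). -/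
open Finset

/-- Under interval uncertainty, for any `p` with `0 ≤ p_e ≤ 1`, the maximum
expected regret satisfies
`sup_{c∈𝓘} (∑_e c_e p_e − F*(c)) = max_{T∈𝓕} (∑_{e∈E∖T} c⁺_e p_e − ∑_{e∈T} c⁻_e (1 − p_e))`. -/
theorem max_expected_regret_combinatorial_interval
    {E : Type*} [Fintype E] [DecidableEq E] [Nonempty E]
    (𝓕 : Finset (Finset E)) (h𝓕 : 𝓕.Nonempty)
    (cm cp : E → ℝ) (hI : ∀ e, cm e ≤ cp e)
    (p : E → ℝ) (hp : ∀ e, 0 ≤ p e ∧ p e ≤ 1) :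
    (⨆ c : {c : E → ℝ // ∀ e, cm e ≤ c e ∧ c e ≤ cp e},
      (∑ e, c.1 e * p e) - 𝓕.inf' h𝓕 (fun T => ∑ e ∈ T, c.1 e))
    =
    𝓕.sup' h𝓕 (fun T =>
      (∑ e ∈ Finset.univ \ T, cp e * p e) - ∑ e ∈ T, cm e * (1 - p e)) := by
  set R := 𝓕.sup' h𝓕 (fun T =>
      (∑ e ∈ Finset.univ \ T, cp e * p e) - ∑ e ∈ T, cm e * (1 - p e)) with hRdef
  have hne : Nonempty {c : E → ℝ // ∀ e, cm e ≤ c e ∧ c e ≤ cp e} :=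
    ⟨⟨cm, fun e => ⟨le_refl _, hI e⟩⟩⟩
  have key : ∀ c : {c : E → ℝ // ∀ e, cm e ≤ c e ∧ c e ≤ cp e},
      (∑ e, c.1 e * p e) - 𝓕.inf' h𝓕 (fun T => ∑ e ∈ T, c.1 e) ≤ R := by
    intro c
    obtain ⟨T, hT, hTeq⟩ := 𝓕.exists_mem_eq_inf' h𝓕 (fun T => ∑ e ∈ T, c.1 e)
    rw [hTeq]
    refine le_trans ?_ (Finset.le_sup' _ hT)
    have hsplit : (∑ e, c.1 e * p e)
        = (∑ e ∈ Finset.univ \ T, c.1 e * p e) + ∑ e ∈ T, c.1 e * p e := by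
      rw [Finset.sum_sdiff (Finset.subset_univ T)]
    have h1 : ∑ e ∈ Finset.univ \ T, c.1 e * p e ≤ ∑ e ∈ Finset.univ \ T, cp e * p e :=
      Finset.sum_le_sum fun e _ => mul_le_mul_of_nonneg_right (c.2 e).2 (hp e).1
    have h2 : ∑ e ∈ T, cm e * (1 - p e) ≤ ∑ e ∈ T, c.1 e * (1 - p e) :=
      Finset.sum_le_sum fun e _ =>
        mul_le_mul_of_nonneg_right (c.2 e).1 (by linarith [(hp e).2])
    have h3 : ∑ e ∈ T, c.1 e * (1 - p e) = ∑ e ∈ T, c.1 e - ∑ e ∈ T, c.1 e * p e := by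
      rw [← Finset.sum_sub_distrib]; congr 1; ext e; ring
    simp only [hsplit]
    linarith
  have hbdd : BddAbove (Set.range fun c : {c : E → ℝ // ∀ e, cm e ≤ c e ∧ c e ≤ cp e} =>
      (∑ e, c.1 e * p e) - 𝓕.inf' h𝓕 (fun T => ∑ e ∈ T, c.1 e)) :=
    ⟨R, by rintro x ⟨c, rfl⟩; exact key c⟩
  refine le_antisymm (ciSup_le key) ?_
  obtain ⟨T₀, hT₀, hT₀eq⟩ := 𝓕.exists_mem_eq_sup' h𝓕 (fun T =>
      (∑ e ∈ Finset.univ \ T, cp e * p e) - ∑ e ∈ T, cm e * (1 - p e))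
  set cstar : {c : E → ℝ // ∀ e, cm e ≤ c e ∧ c e ≤ cp e} :=
    ⟨fun e => if e ∈ T₀ then cm e else cp e, fun e => by
      by_cases h : e ∈ T₀ <;> simp [h, hI e]⟩ with hcs
  refine le_trans ?_ (le_ciSup hbdd cstar)
  rw [hRdef, hT₀eq]
  have hinf : 𝓕.inf' h𝓕 (fun T => ∑ e ∈ T, cstar.1 e) ≤ ∑ e ∈ T₀, cstar.1 e :=
    Finset.inf'_le _ hT₀
  have hA : ∑ e ∈ T₀, cstar.1 e = ∑ e ∈ T₀, cm e :=
    Finset.sum_congr rfl fun e he => by simp [hcs, he]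
  have hB : (∑ e, cstar.1 e * p e)
      = (∑ e ∈ Finset.univ \ T₀, cp e * p e) + ∑ e ∈ T₀, cm e * p e := by
    rw [← Finset.sum_sdiff (Finset.subset_univ T₀)]
    congr 1
    · exact Finset.sum_congr rfl fun e he => by
        simp [hcs, (Finset.mem_sdiff.mp he).2]
    · exact Finset.sum_congr rfl fun e he => by simp [hcs, he]
  have hC : ∑ e ∈ T₀, cm e * (1 - p e) = ∑ e ∈ T₀, cm e - ∑ e ∈ T₀, cm e * p e := by
    rw [← Finset.sum_sub_distrib]; congr 1; ext e; ring
  rw [hB]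
  rw [hA] at hinf
  linarith
end

section
/- The randomized minmax regret under interval uncertainty can be computed over the convex hull of solutions: min over all mixed strategies y of sup_{c∈𝓘} ( ∑_{T∈𝓕} y_T F(T,c) − F*(c) ) equals min_{p ∈ CH(X)} max_{T∈𝓕} ( ∑_{e ∈ E∖T} c^+_e p_e − ∑_{e∈T} c^-_e (1 − p_e) ). -/
open Finset

section Aux

variable {E : Type*} [Fintype E] [DecidableEq E]

/-- characteristic vector -/
noncomputable def chiv (T : Finset E) : E → ℝ := fun e => if e ∈ T then 1 else 0

lemma chiv_inj : Function.Injective (chiv (E := E)) := by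
  intro T T' h
  ext e
  have := congrFun h e
  by_cases hT : e ∈ T <;> by_cases hT' : e ∈ T' <;>
    simp [chiv, hT, hT'] at this ⊢ <;> try assumption

variable (𝓕 : Finset (Finset E))

/-- induced probability vector -/
noncomputable def pvec (y : {T // T ∈ 𝓕} → ℝ) : E → ℝ :=
  fun e => ∑ T : {T // T ∈ 𝓕}, y T * chiv T.1 e

lemma pvec_nonneg {y : {T // T ∈ 𝓕} → ℝ} (hy : y ∈ stdSimplex ℝ {T // T ∈ 𝓕}) (e : E) :
    0 ≤ pvec 𝓕 y e := by
  apply Finset.sum_nonneg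
  intro T _
  apply mul_nonneg (hy.1 T)
  unfold chiv; positivity

lemma pvec_le_one {y : {T // T ∈ 𝓕} → ℝ} (hy : y ∈ stdSimplex ℝ {T // T ∈ 𝓕}) (e : E) :
    pvec 𝓕 y e ≤ 1 := by
  have h1 : pvec 𝓕 y e ≤ ∑ T : {T // T ∈ 𝓕}, y T := by
    apply Finset.sum_le_sum
    intro T _
    by_cases h : e ∈ T.1 <;> simp [chiv, h, hy.1 T]
  calc pvec 𝓕 y e ≤ _ := h1
    _ = 1 := hy.2

lemma sum_indicator (c : E → ℝ) (T : Finset E) :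
    ∑ e ∈ T, c e = ∑ e : E, chiv T e * c e := by
  rw [eq_comm]
  simp [chiv, ite_mul, Finset.sum_ite_mem]

lemma sum_swap_pvec (y : {T // T ∈ 𝓕} → ℝ) (c : E → ℝ) :
    (∑ T : {T // T ∈ 𝓕}, y T * ∑ e ∈ T.1, c e) = ∑ e : E, pvec 𝓕 y e * c e := by
  unfold pvec
  simp only [sum_indicator c, Finset.mul_sum, Finset.sum_mul]
  rw [Finset.sum_comm]
  apply Finset.sum_congr rfl
  intro e _
  apply Finset.sum_congr rfl
  intro T _
  ring

end Aux

/-- The randomized minmax regret under interval uncertainty can be computed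
over the convex hull of solutions. -/
theorem randomized_minmax_regret_over_convexHull_interval
    {E : Type*} [Fintype E] [DecidableEq E] [Nonempty E]
    (𝓕 : Finset (Finset E)) (h𝓕 : 𝓕.Nonempty)
    (cm cp : E → ℝ) (hI : ∀ e, cm e ≤ cp e) :
    (⨅ y : stdSimplex ℝ {T // T ∈ 𝓕},
      ⨆ c : {c : E → ℝ // ∀ e, cm e ≤ c e ∧ c e ≤ cp e},
        (∑ T : {T // T ∈ 𝓕}, y.1 T * ∑ e ∈ T.1, c.1 e)
          - 𝓕.inf' h𝓕 (fun T => ∑ e ∈ T, c.1 e))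
    =
    (⨅ p : (convexHull ℝ
        {x : E → ℝ | ∃ T ∈ 𝓕, x = fun e => if e ∈ T then (1 : ℝ) else 0} : Set (E → ℝ)),
      𝓕.sup' h𝓕 (fun T =>
        (∑ e ∈ Finset.univ \ T, cp e * p.1 e) - ∑ e ∈ T, cm e * (1 - p.1 e))) := by
  classical
  set X : Set (E → ℝ) := {x : E → ℝ | ∃ T ∈ 𝓕, x = fun e => if e ∈ T then (1 : ℝ) else 0}
  have hX : X = ↑(𝓕.image chiv) := by
    ext x
    simp only [X, Set.mem_setOf_eq, Finset.coe_image, Set.mem_image, Finset.mem_coe]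
    constructor
    · rintro ⟨T, hT, rfl⟩; exact ⟨T, hT, rfl⟩
    · rintro ⟨T, hT, rfl⟩; exact ⟨T, hT, rfl⟩
  set g : Finset E → (E → ℝ) → ℝ := fun T p =>
    (∑ e ∈ Finset.univ \ T, cp e * p e) - ∑ e ∈ T, cm e * (1 - p e) with hg
  set G : (E → ℝ) → ℝ := fun p => 𝓕.sup' h𝓕 (fun T => g T p) with hG
  -- key upper bound: for p ∈ [0,1]^E, c ∈ [cm,cp], T:
  have key_le : ∀ (p c : E → ℝ), (∀ e, 0 ≤ p e) → (∀ e, p e ≤ 1) →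
      (∀ e, cm e ≤ c e ∧ c e ≤ cp e) → ∀ T : Finset E,
      (∑ e : E, p e * c e) - ∑ e ∈ T, c e ≤ g T p := by
    intro p c hp0 hp1 hc T
    have hsplit : (∑ e : E, p e * c e)
        = (∑ e ∈ Finset.univ \ T, p e * c e) + ∑ e ∈ T, p e * c e := by
      rw [Finset.sum_sdiff (Finset.subset_univ T)]
    rw [hsplit, hg]
    have h1 : ∑ e ∈ Finset.univ \ T, p e * c e ≤ ∑ e ∈ Finset.univ \ T, cp e * p e := by
      apply Finset.sum_le_sum
      intro e _
      rw [mul_comm (cp e)]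
      exact mul_le_mul_of_nonneg_left (hc e).2 (hp0 e)
    have h2 : ∑ e ∈ T, cm e * (1 - p e) ≤ ∑ e ∈ T, (c e - p e * c e) := by
      apply Finset.sum_le_sum
      intro e _
      have : c e - p e * c e = c e * (1 - p e) := by ring
      rw [this]
      exact mul_le_mul_of_nonneg_right (hc e).1 (by linarith [hp1 e])
    have : (∑ e ∈ T, p e * c e) - ∑ e ∈ T, c e = -(∑ e ∈ T, (c e - p e * c e)) := by
      rw [← Finset.sum_sub_distrib, ← Finset.sum_neg_distrib]
      apply Finset.sum_congr rfl
      intro e _; ring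
    beta_reduce
    linarith
  -- corner equality
  have key_eq : ∀ (p : E → ℝ) (T : Finset E),
      (∑ e : E, p e * (if e ∈ T then cm e else cp e))
        - ∑ e ∈ T, (if e ∈ T then cm e else cp e) = g T p := by
    intro p T
    have hsplit : (∑ e : E, p e * (if e ∈ T then cm e else cp e))
        = (∑ e ∈ Finset.univ \ T, p e * (if e ∈ T then cm e else cp e))
          + ∑ e ∈ T, p e * (if e ∈ T then cm e else cp e) := by
      rw [Finset.sum_sdiff (Finset.subset_univ T)]
    rw [hsplit, hg]
    have e1 : ∑ e ∈ Finset.univ \ T, p e * (if e ∈ T then cm e else cp e)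
        = ∑ e ∈ Finset.univ \ T, cp e * p e := by
      apply Finset.sum_congr rfl
      intro e he
      rw [Finset.mem_sdiff] at he
      rw [if_neg he.2]; ring
    have e2 : ∑ e ∈ T, p e * (if e ∈ T then cm e else cp e) = ∑ e ∈ T, p e * cm e := by
      apply Finset.sum_congr rfl
      intro e he; rw [if_pos he]
    have e3 : ∑ e ∈ T, (if e ∈ T then cm e else cp e) = ∑ e ∈ T, cm e := by
      apply Finset.sum_congr rfl
      intro e he; rw [if_pos he]
    have e4 : (∑ e ∈ T, p e * cm e) - ∑ e ∈ T, cm e = -∑ e ∈ T, cm e * (1 - p e) := by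
      rw [← Finset.sum_sub_distrib, ← Finset.sum_neg_distrib]
      apply Finset.sum_congr rfl
      intro e _; ring
    beta_reduce
    rw [e1, e2, e3]
    linarith
  -- Lemma A: inner sup computation
  have lemA : ∀ y : stdSimplex ℝ {T // T ∈ 𝓕},
      (⨆ c : {c : E → ℝ // ∀ e, cm e ≤ c e ∧ c e ≤ cp e},
        (∑ T : {T // T ∈ 𝓕}, y.1 T * ∑ e ∈ T.1, c.1 e)
          - 𝓕.inf' h𝓕 (fun T => ∑ e ∈ T, c.1 e)) = G (pvec 𝓕 y.1) := by
    intro y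
    haveI : Nonempty {c : E → ℝ // ∀ e, cm e ≤ c e ∧ c e ≤ cp e} :=
      ⟨⟨cm, fun e => ⟨le_refl _, hI e⟩⟩⟩
    set p := pvec 𝓕 y.1 with hp
    have hp0 := pvec_nonneg 𝓕 y.2
    have hp1 := pvec_le_one 𝓕 y.2
    have hub : ∀ c : {c : E → ℝ // ∀ e, cm e ≤ c e ∧ c e ≤ cp e},
        (∑ T : {T // T ∈ 𝓕}, y.1 T * ∑ e ∈ T.1, c.1 e)
          - 𝓕.inf' h𝓕 (fun T => ∑ e ∈ T, c.1 e) ≤ G p := by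
      intro c
      obtain ⟨T0, hT0, hT0eq⟩ := Finset.exists_mem_eq_inf' h𝓕 (fun T => ∑ e ∈ T, c.1 e)
      rw [hT0eq, sum_swap_pvec, ← hp]
      calc (∑ e : E, p e * c.1 e) - ∑ e ∈ T0, c.1 e
          ≤ g T0 p := key_le p c.1 hp0 hp1 c.2 T0
        _ ≤ G p := Finset.le_sup' (fun T => g T p) hT0
    apply le_antisymm
    · exact ciSup_le hub
    · obtain ⟨Ts, hTs, hTseq⟩ := Finset.exists_mem_eq_sup' h𝓕 (fun T => g T p)
      set cs : E → ℝ := fun e => if e ∈ Ts then cm e else cp e with hcs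
      have hcsmem : ∀ e, cm e ≤ cs e ∧ cs e ≤ cp e := by
        intro e
        by_cases h : e ∈ Ts <;> simp [hcs, h, hI e]
      have hbdd : BddAbove (Set.range fun c : {c : E → ℝ // ∀ e, cm e ≤ c e ∧ c e ≤ cp e} =>
          (∑ T : {T // T ∈ 𝓕}, y.1 T * ∑ e ∈ T.1, c.1 e)
            - 𝓕.inf' h𝓕 (fun T => ∑ e ∈ T, c.1 e)) := by
        refine ⟨G p, ?_⟩
        rintro x ⟨c, rfl⟩
        exact hub c
      have hval : G p ≤ (∑ T : {T // T ∈ 𝓕}, y.1 T * ∑ e ∈ T.1, cs e)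
          - 𝓕.inf' h𝓕 (fun T => ∑ e ∈ T, cs e) := by
        rw [sum_swap_pvec, ← hp]
        have h1 : 𝓕.inf' h𝓕 (fun T => ∑ e ∈ T, cs e) ≤ ∑ e ∈ Ts, cs e :=
          Finset.inf'_le _ hTs
        have h2 : (∑ e : E, p e * cs e) - ∑ e ∈ Ts, cs e = g Ts p := key_eq p Ts
        rw [hG]
        simp only
        rw [hTseq]
        linarith
      exact le_trans hval (le_ciSup hbdd ⟨cs, hcsmem⟩)
  -- now equalities of infima via range equality
  have hrange : Set.range (fun y : stdSimplex ℝ {T // T ∈ 𝓕} => G (pvec 𝓕 y.1))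
      = Set.range (fun p : (convexHull ℝ X : Set (E → ℝ)) => G p.1) := by
    apply Set.eq_of_subset_of_subset
    · rintro x ⟨y, rfl⟩
      have hmem : pvec 𝓕 y.1 ∈ convexHull ℝ X := by
        apply mem_convexHull_of_exists_fintype y.1 (fun T : {T // T ∈ 𝓕} => chiv T.1)
          y.2.1 y.2.2
        · intro T
          exact ⟨T.1, T.2, rfl⟩
        · funext e
          simp only [Finset.sum_apply, Pi.smul_apply, smul_eq_mul]
          rfl
      exact ⟨⟨_, hmem⟩, rfl⟩
    · rintro x ⟨⟨p, hpmem⟩, rfl⟩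
      rw [hX, Finset.mem_convexHull'] at hpmem
      obtain ⟨w, hw0, hw1, hwsum⟩ := hpmem
      set y : {T // T ∈ 𝓕} → ℝ := fun T => w (chiv T.1) with hy
      have hymem : y ∈ stdSimplex ℝ {T // T ∈ 𝓕} := by
        constructor
        · intro T
          exact hw0 _ (Finset.mem_image_of_mem _ T.2)
        · show ∑ T : {T // T ∈ 𝓕}, w (chiv T.1) = 1
          rw [Finset.sum_image (fun a _ b _ h => chiv_inj h)] at hw1
          rw [Finset.sum_coe_sort 𝓕 (fun T => w (chiv T)), hw1]
      have hpeq : pvec 𝓕 y = p := by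
        funext e
        have h1 : (∑ x ∈ Finset.image chiv 𝓕, w x • x) e = p e := congrFun hwsum e
        rw [Finset.sum_apply, Finset.sum_image (fun a _ b _ h => chiv_inj h)] at h1
        rw [← h1]
        show ∑ T : {T // T ∈ 𝓕}, w (chiv T.1) * chiv T.1 e = _
        rw [Finset.sum_coe_sort 𝓕 (fun T => w (chiv T) * chiv T e)]
        apply Finset.sum_congr rfl
        intro T _
        simp [smul_eq_mul]
      exact ⟨⟨y, hymem⟩, by simp [hpeq]⟩
  calc (⨅ y : stdSimplex ℝ {T // T ∈ 𝓕},
      ⨆ c : {c : E → ℝ // ∀ e, cm e ≤ c e ∧ c e ≤ cp e},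
        (∑ T : {T // T ∈ 𝓕}, y.1 T * ∑ e ∈ T.1, c.1 e)
          - 𝓕.inf' h𝓕 (fun T => ∑ e ∈ T, c.1 e))
      = ⨅ y : stdSimplex ℝ {T // T ∈ 𝓕}, G (pvec 𝓕 y.1) := iInf_congr lemA
    _ = ⨅ p : (convexHull ℝ X : Set (E → ℝ)), G p.1 := by
        rw [iInf, iInf, hrange]
    _ = _ := rfl
end

section
/- Separation identity for interval uncertainty: for any p : E → ℝ, defining modified costs d : E → ℝ by d_e = c^-_e + p_e (c^+_e − c^-_e), one has ∑_{e∈E} c^+_e p_e − F*(d) = max_{T∈𝓕} ( ∑_{e ∈ E∖T} c^+_e p_e − ∑_{e∈T} c^-_e (1 − p_e) ). -/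
open Finset

/-- Separation identity for interval uncertainty: with modified costs
`d_e = c⁻_e + p_e (c⁺_e − c⁻_e)`, one has
`∑_e c⁺_e p_e − F*(d) = max_{T∈𝓕} (∑_{e∈E∖T} c⁺_e p_e − ∑_{e∈T} c⁻_e (1 − p_e))`. -/
theorem separation_identity_interval
    {E : Type*} [Fintype E] [DecidableEq E] [Nonempty E]
    (𝓕 : Finset (Finset E)) (h𝓕 : 𝓕.Nonempty)
    (cm cp : E → ℝ)
    (p : E → ℝ)
    (d : E → ℝ) (hd : ∀ e, d e = cm e + p e * (cp e - cm e)) :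
    (∑ e, cp e * p e) - 𝓕.inf' h𝓕 (fun T => ∑ e ∈ T, d e)
    =
    𝓕.sup' h𝓕 (fun T =>
      (∑ e ∈ Finset.univ \ T, cp e * p e) - ∑ e ∈ T, cm e * (1 - p e)) := by
  have key : ∀ T : Finset E,
      (∑ e ∈ Finset.univ \ T, cp e * p e) - ∑ e ∈ T, cm e * (1 - p e)
      = (∑ e, cp e * p e) - ∑ e ∈ T, d e := by
    intro T
    have h1 : (∑ e, cp e * p e)
        = (∑ e ∈ Finset.univ \ T, cp e * p e) + ∑ e ∈ T, cp e * p e :=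
      (Finset.sum_sdiff (Finset.subset_univ T)).symm
    have h2 : ∑ e ∈ T, d e = ∑ e ∈ T, (cp e * p e + cm e * (1 - p e)) :=
      Finset.sum_congr rfl (by intro e _; rw [hd]; ring)
    rw [h1, h2, Finset.sum_add_distrib]; ring
  rw [Finset.sup'_congr h𝓕 rfl (fun T _ => key T)]
  obtain ⟨T0, hT0, hmin⟩ := 𝓕.exists_min_image (fun T => ∑ e ∈ T, d e) h𝓕
  have hinf : 𝓕.inf' h𝓕 (fun T => ∑ e ∈ T, d e) = ∑ e ∈ T0, d e :=
    le_antisymm (Finset.inf'_le _ hT0) (Finset.le_inf' _ _ hmin)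
  apply le_antisymm
  · rw [hinf]; exact Finset.le_sup' (fun T => (∑ e, cp e * p e) - ∑ e ∈ T, d e) hT0
  · apply Finset.sup'_le
    intro T hT
    have := Finset.inf'_le (fun T => ∑ e ∈ T, d e) hT
    linarith
end

section
/- Minimax duality under interval uncertainty: Z_R = max over all probability vectors w = (w_A)_{A∈𝓕} (w_A ≥ 0, ∑_{A∈𝓕} w_A = 1) of min_{T∈𝓕} ∑_{A∈𝓕} w_A ( F(T, c^A) − F*(c^A) ), where for A ∈ 𝓕 the cost vector c^A ∈ 𝓘 is defined by c^A_e = c^-_e for e ∈ A and c^A_e = c^+_e for e ∉ A. -/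
/-!
Writing `p ∈ CH(X)` as `∑_T q_T χ_T` turns the regret of `A` into the bilinear payoff
`∑_T q_T (F(T, c^A) − F(A, c^A))`, so `Z_R` is the upper value of a finite matrix game, which
equals its lower value by von Neumann's minimax theorem (a special case of Sion's). In the lower
value, `F(A, c^A)` may be replaced by `F*(c^A)`: this only raises the payoff, and moving the
weight of each `A` to a minimiser `B` of `F(·, c^A)` loses nothing, because `c^B` is the worst
scenario for `B`: `F(T, c) − F(B, c) ≤ F(T, c^B) − F(B, c^B)` for every `c ∈ 𝓘`.
-/

open Finset

section WeightedAverage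

variable {ι : Type*} [Fintype ι] [Nonempty ι] {w : ι → ℝ}

theorem sum_mul_le_sup'_of_mem_stdSimplex (hw : w ∈ stdSimplex ℝ ι) (x : ι → ℝ) :
    ∑ i, w i * x i ≤ univ.sup' univ_nonempty x := by
  have h := centerMass_le_sup (s := univ) (f := x) (fun i _ => hw.1 i) (by simp [hw.2])
  rwa [centerMass_eq_of_sum_1 _ _ hw.2] at h

theorem inf'_le_sum_mul_of_mem_stdSimplex (hw : w ∈ stdSimplex ℝ ι) (x : ι → ℝ) :
    univ.inf' univ_nonempty x ≤ ∑ i, w i * x i := by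
  have h := inf_le_centerMass (s := univ) (f := x) (fun i _ => hw.1 i) (by simp [hw.2])
  rwa [centerMass_eq_of_sum_1 _ _ hw.2] at h

end WeightedAverage

theorem stdSimplex.sum_map_mul {X Y : Type*} [Fintype X] [Fintype Y] (f : X → Y)
    (w : stdSimplex ℝ X) (g : Y → ℝ) :
    ∑ y, (stdSimplex.map f w).1 y * g y = ∑ x, w.1 x * g (f x) := by
  classical
  rw [← sum_fiberwise univ f fun x => w.1 x * g (f x)]
  refine sum_congr rfl fun y _ => ?_
  change FunOnFinite.linearMap ℝ ℝ f w.1 y * g y = _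
  rw [FunOnFinite.linearMap_apply_apply, sum_mul]
  exact sum_congr rfl fun x hx => by rw [(mem_filter.1 hx).2]

theorem convexHull_range_eq_image_stdSimplex {ι V : Type*} [Fintype ι] [AddCommGroup V]
    [Module ℝ V] (v : ι → V) :
    convexHull ℝ (Set.range v) = (fun q : ι → ℝ => ∑ i, q i • v i) '' stdSimplex ℝ ι := by
  classical
  have hL : (fun q : ι → ℝ => ∑ i, q i • v i) = Fintype.linearCombination ℝ v :=
    funext fun q => (Fintype.linearCombination_apply ℝ v q).symm
  rw [← convexHull_rangle_single_eq_stdSimplex, hL, LinearMap.image_convexHull, ← Set.range_comp]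
  congr
  funext i
  simp

theorem Finset.inf'_eq_inf'_univ_subtype {α β : Type*} [SemilatticeInf α] (s : Finset β)
    (hs : s.Nonempty) [Nonempty s] (f : β → α) :
    s.inf' hs f = univ.inf' univ_nonempty fun x : s => f x :=
  le_antisymm (le_inf' _ _ fun x _ => inf'_le f x.2)
    (le_inf' _ _ fun b hb => inf'_le (fun x : s => f x) (mem_univ ⟨b, hb⟩))

theorem Finset.sup'_eq_sup'_univ_subtype {α β : Type*} [SemilatticeSup α] (s : Finset β)
    (hs : s.Nonempty) [Nonempty s] (f : β → α) :
    s.sup' hs f = univ.sup' univ_nonempty fun x : s => f x :=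
  Finset.inf'_eq_inf'_univ_subtype (α := αᵒᵈ) s hs f

theorem iInf_convexHull_range_eq_iInf_stdSimplex {ι V : Type*} [Fintype ι] [AddCommGroup V]
    [Module ℝ V] (v : ι → V) (f : V → ℝ) :
    ⨅ p : convexHull ℝ (Set.range v), f p = ⨅ q : stdSimplex ℝ ι, f (∑ i, q.1 i • v i) := by
  rw [convexHull_range_eq_image_stdSimplex, iInf, iInf]
  congr 1
  ext
  simp

namespace MatrixGame

variable {ι κ : Type*} [Fintype ι] [Fintype κ]

noncomputable def upperValue [Nonempty κ] (M : ι → κ → ℝ) : ℝ :=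
  ⨅ q : stdSimplex ℝ ι, univ.sup' univ_nonempty fun a => ∑ t, q.1 t * M t a

noncomputable def lowerValue [Nonempty ι] (M : ι → κ → ℝ) : ℝ :=
  ⨆ w : stdSimplex ℝ κ, univ.inf' univ_nonempty fun t => ∑ a, w.1 a * M t a

theorem inf'_le_sup' [Nonempty ι] [Nonempty κ] (M : ι → κ → ℝ) {q : ι → ℝ} {w : κ → ℝ}
    (hq : q ∈ stdSimplex ℝ ι) (hw : w ∈ stdSimplex ℝ κ) :
    univ.inf' univ_nonempty (fun t => ∑ a, w a * M t a) ≤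
      univ.sup' univ_nonempty (fun a => ∑ t, q t * M t a) :=
  calc _ ≤ ∑ t, q t * ∑ a, w a * M t a := inf'_le_sum_mul_of_mem_stdSimplex hq _
    _ = ∑ a, w a * ∑ t, q t * M t a := by
      simp only [mul_sum]
      rw [sum_comm]
      exact sum_congr rfl fun _ _ => sum_congr rfl fun _ _ => by ring
    _ ≤ _ := sum_mul_le_sup'_of_mem_stdSimplex hw _

theorem bddAbove_range_lowerValue [Nonempty ι] [Nonempty κ] (M : ι → κ → ℝ) :
    BddAbove (Set.range fun w : stdSimplex ℝ κ =>
      univ.inf' univ_nonempty fun t => ∑ a, w.1 a * M t a) := by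
  obtain ⟨q⟩ := (inferInstance : Nonempty (stdSimplex ℝ ι))
  exact ⟨_, Set.forall_mem_range.2 fun w => inf'_le_sup' M q.2 w.2⟩

theorem upperValue_eq_lowerValue [Nonempty ι] [Nonempty κ] (M : ι → κ → ℝ) :
    upperValue M = lowerValue M := by
  classical
  obtain ⟨B, hB⟩ : ∃ B : (ι → ℝ) →ₗ[ℝ] (κ → ℝ) →ₗ[ℝ] ℝ,
      ∀ q w, B q w = ∑ t, q t * ∑ a, w a * M t a :=
    ⟨Matrix.toLinearMap₂' ℝ (Matrix.of M), fun q w => by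
      simp only [Matrix.toLinearMap₂'_apply, Matrix.of_apply, smul_eq_mul, mul_sum]⟩
  have hcont : ∀ q, Continuous (B q) := fun q => LinearMap.continuous_of_finiteDimensional _
  have hcont' : ∀ w, Continuous (B.flip w) := fun w => LinearMap.continuous_of_finiteDimensional _
  obtain ⟨q₀, hq₀, w₀, hw₀, hsaddle⟩ := Sion.exists_isSaddlePointOn (f := fun q w => B q w)
    ⟨_, single_mem_stdSimplex ℝ (Classical.arbitrary ι)⟩ (convex_stdSimplex ℝ ι)
    (isCompact_stdSimplex ℝ ι)
    (fun w _ => (hcont' w).lowerSemicontinuous.lowerSemicontinuousOn _)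
    (fun w _ => ((B.flip w).convexOn (convex_stdSimplex ℝ ι)).quasiconvexOn)
    (convex_stdSimplex ℝ κ) ⟨_, single_mem_stdSimplex ℝ (Classical.arbitrary κ)⟩
    (isCompact_stdSimplex ℝ κ)
    (fun q _ => (hcont q).upperSemicontinuous.upperSemicontinuousOn _)
    (fun q _ => ((B q).concaveOn (convex_stdSimplex ℝ κ)).quasiconcaveOn)
  have hsaddle_le : univ.sup' univ_nonempty (fun a => ∑ t, q₀ t * M t a) ≤
      univ.inf' univ_nonempty (fun t => ∑ a, w₀ a * M t a) := by
    refine sup'_le _ _ fun a _ => le_inf' _ _ fun t _ => ?_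
    have := hsaddle _ (single_mem_stdSimplex ℝ t) _ (single_mem_stdSimplex ℝ a)
    simpa only [hB, Pi.single_apply, ite_mul, one_mul, zero_mul, sum_ite_eq', mem_univ,
      if_true] using this
  have hmin : upperValue M = univ.sup' univ_nonempty (fun a => ∑ t, q₀ t * M t a) :=
    IsMinOn.iInf_eq hq₀
      (f := fun q : ι → ℝ => univ.sup' univ_nonempty (fun a => ∑ t, q t * M t a))
      (isMinOn_iff.2 fun q hq => hsaddle_le.trans (inf'_le_sup' M hq hw₀))
  have hmax : lowerValue M = univ.inf' univ_nonempty (fun t => ∑ a, w₀ a * M t a) :=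
    IsMaxOn.iSup_eq hw₀
      (f := fun w : κ → ℝ => univ.inf' univ_nonempty (fun t => ∑ a, w a * M t a))
      (isMaxOn_iff.2 fun w hw => (inf'_le_sup' M hq₀ hw).trans hsaddle_le)
  rw [hmin, hmax]
  exact le_antisymm hsaddle_le (inf'_le_sup' M hq₀ hw₀)

theorem lowerValue_mono [Nonempty ι] [Nonempty κ] {M N : ι → κ → ℝ}
    (h : ∀ t a, M t a ≤ N t a) : lowerValue M ≤ lowerValue N :=
  ciSup_mono (bddAbove_range_lowerValue N) fun w => inf'_mono_fun fun t _ =>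
    sum_le_sum fun a _ => mul_le_mul_of_nonneg_left (h t a) (w.2.1 a)

theorem lowerValue_comp_le [Nonempty ι] {κ' : Type*} [Fintype κ'] [Nonempty κ] [Nonempty κ']
    (M : ι → κ' → ℝ) (σ : κ → κ') :
    lowerValue (fun t a => M t (σ a)) ≤ lowerValue M :=
  ciSup_le fun w => le_ciSup_of_le (bddAbove_range_lowerValue M) (stdSimplex.map σ w)
    (le_of_eq <| by simp only [stdSimplex.sum_map_mul])

end MatrixGame

def regret {E : Type*} (𝓕 : Finset (Finset E)) (h𝓕 : 𝓕.Nonempty) (c : E → ℝ)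
    (T : Finset E) : ℝ :=
  ∑ e ∈ T, c e - 𝓕.inf' h𝓕 fun T' => ∑ e ∈ T', c e

section IntervalUncertainty

variable {E : Type*} [DecidableEq E] (cm cp : E → ℝ)

def worstScenario (A : Finset E) : E → ℝ := fun e => if e ∈ A then cm e else cp e

theorem worstScenario_mem_Icc (hI : cm ≤ cp) (A : Finset E) :
    worstScenario cm cp A ∈ Set.Icc cm cp := by
  constructor <;> intro e <;> by_cases he : e ∈ A <;> simp [worstScenario, he, hI e]

theorem sum_sub_sum_le_worstScenario {c : E → ℝ} (hc : c ∈ Set.Icc cm cp) (T B : Finset E) :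
    ∑ e ∈ T, c e - ∑ e ∈ B, c e ≤
      ∑ e ∈ T, worstScenario cm cp B e - ∑ e ∈ B, worstScenario cm cp B e := by
  rw [← sum_sdiff_sub_sum_sdiff (f := c),
    ← sum_sdiff_sub_sum_sdiff (f := worstScenario cm cp B)]
  gcongr with e he e he
  · simp [worstScenario, (mem_sdiff.1 he).2, hc.2 e]
  · simp [worstScenario, (mem_sdiff.1 he).1, hc.1 e]

def intervalPayoff (T A : Finset E) : ℝ :=
  ∑ e ∈ T, worstScenario cm cp A e - ∑ e ∈ A, worstScenario cm cp A e

theorem lowerValue_intervalPayoff_eq_lowerValue_regret (𝓕 : Finset (Finset E))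
    (h𝓕 : 𝓕.Nonempty) [Nonempty 𝓕] (hI : cm ≤ cp) :
    MatrixGame.lowerValue (fun T A : 𝓕 => intervalPayoff cm cp T.1 A.1) =
      MatrixGame.lowerValue fun T A : 𝓕 => regret 𝓕 h𝓕 (worstScenario cm cp A.1) T.1 := by
  choose σ hσ𝓕 hσ using fun A : 𝓕 =>
    exists_mem_eq_inf' h𝓕 fun T' => ∑ e ∈ T', worstScenario cm cp A.1 e
  refine le_antisymm (MatrixGame.lowerValue_mono fun T A => ?_) ?_
  · exact sub_le_sub_left (inf'_le (fun T' => ∑ e ∈ T', worstScenario cm cp A.1 e) A.2) _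
  · refine (MatrixGame.lowerValue_mono fun T A => ?_).trans
      (MatrixGame.lowerValue_comp_le _ fun A => ⟨σ A, hσ𝓕 A⟩)
    rw [regret, hσ]
    exact sum_sub_sum_le_worstScenario cm cp (worstScenario_mem_Icc cm cp hI _) _ _

variable [Fintype E]

def randomizedRegret (p : E → ℝ) (T : Finset E) : ℝ :=
  ∑ e ∈ univ \ T, cp e * p e - ∑ e ∈ T, cm e * (1 - p e)

theorem randomizedRegret_eq (p : E → ℝ) (A : Finset E) :
    randomizedRegret cm cp p A =
      ∑ e, worstScenario cm cp A e * p e - ∑ e ∈ A, worstScenario cm cp A e := by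
  have hA : ∀ e ∈ A, worstScenario cm cp A e = cm e := fun e he => if_pos he
  have hAc : ∀ e ∈ univ \ A, worstScenario cm cp A e = cp e :=
    fun e he => if_neg (mem_sdiff.1 he).2
  rw [randomizedRegret, ← sum_sdiff (subset_univ A), sum_congr rfl hA,
    sum_congr rfl fun e he => congrArg (· * p e) (hAc e he),
    sum_congr rfl fun e he => congrArg (· * p e) (hA e he)]
  simp only [mul_sub, mul_one, sum_sub_distrib]
  ring

theorem sum_mul_sum_smul_indicator {ι : Type*} [Fintype ι] (c : E → ℝ) (q : ι → ℝ)
    (S : ι → Finset E) :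
    ∑ e, c e * (∑ i, q i • fun e => if e ∈ S i then (1 : ℝ) else 0) e =
      ∑ i, q i * ∑ e ∈ S i, c e := by
  simp only [Finset.sum_apply, Pi.smul_apply, smul_eq_mul, mul_ite, mul_one, mul_zero, mul_sum]
  rw [sum_comm]
  simp [sum_ite_mem, mul_comm]

theorem randomizedRegret_sum_smul_indicator {ι : Type*} [Fintype ι] {q : ι → ℝ}
    (hq : q ∈ stdSimplex ℝ ι) (S : ι → Finset E) (A : Finset E) :
    randomizedRegret cm cp (∑ i, q i • fun e => if e ∈ S i then (1 : ℝ) else 0) A =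
      ∑ i, q i * intervalPayoff cm cp (S i) A := by
  rw [randomizedRegret_eq, sum_mul_sum_smul_indicator]
  simp only [intervalPayoff, mul_sub, sum_sub_distrib, ← sum_mul, hq.2, one_mul]

end IntervalUncertainty

theorem minmax_eq_maxmin_interval_general
    {E : Type*} [Fintype E] [DecidableEq E]
    (𝓕 : Finset (Finset E)) (h𝓕 : 𝓕.Nonempty)
    (cm cp : E → ℝ) (hI : ∀ e, cm e ≤ cp e) :
    (⨅ p : (convexHull ℝ
        {x : E → ℝ | ∃ T ∈ 𝓕, x = fun e => if e ∈ T then (1 : ℝ) else 0} : Set (E → ℝ)),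
      𝓕.sup' h𝓕 (fun T =>
        (∑ e ∈ Finset.univ \ T, cp e * p.1 e) - ∑ e ∈ T, cm e * (1 - p.1 e)))
    =
    (⨆ w : stdSimplex ℝ {A // A ∈ 𝓕},
      𝓕.inf' h𝓕 (fun T =>
        ∑ A : {A // A ∈ 𝓕}, w.1 A *
          ((∑ e ∈ T, (if e ∈ A.1 then cm e else cp e))
            - 𝓕.inf' h𝓕 (fun T' => ∑ e ∈ T', if e ∈ A.1 then cm e else cp e)))) := by
  have : Nonempty 𝓕 := h𝓕.to_subtype
  have hX : {x : E → ℝ | ∃ T ∈ 𝓕, x = fun e => if e ∈ T then (1 : ℝ) else 0} =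
      Set.range fun T : 𝓕 => fun e => if e ∈ T.1 then (1 : ℝ) else 0 :=
    Set.ext fun _ => ⟨fun ⟨T, hT, h⟩ => ⟨⟨T, hT⟩, h.symm⟩, fun ⟨T, h⟩ => ⟨T.1, T.2, h.symm⟩⟩
  rw [hX]
  calc _ = MatrixGame.upperValue fun T A : 𝓕 => intervalPayoff cm cp T.1 A.1 :=
        (iInf_convexHull_range_eq_iInf_stdSimplex _
            fun p => 𝓕.sup' h𝓕 (randomizedRegret cm cp p)).trans <|
          iInf_congr fun q => (Finset.sup'_eq_sup'_univ_subtype 𝓕 h𝓕 _).trans <|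
            sup'_congr _ rfl fun A _ =>
              randomizedRegret_sum_smul_indicator cm cp q.2 (fun T : 𝓕 => T.1) A.1
    _ = MatrixGame.lowerValue fun T A : 𝓕 => intervalPayoff cm cp T.1 A.1 :=
        MatrixGame.upperValue_eq_lowerValue _
    _ = MatrixGame.lowerValue fun T A : 𝓕 => regret 𝓕 h𝓕 (worstScenario cm cp A.1) T.1 :=
        lowerValue_intervalPayoff_eq_lowerValue_regret cm cp 𝓕 h𝓕 hI
    _ = _ := iSup_congr fun w => (Finset.inf'_eq_inf'_univ_subtype 𝓕 h𝓕
          fun T => ∑ A : 𝓕, w.1 A * regret 𝓕 h𝓕 (worstScenario cm cp A.1) T).symm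

/-- Minimax duality under interval uncertainty:
`Z_R = max_{w ∈ Δ(𝓕)} min_{T∈𝓕} ∑_{A∈𝓕} w_A (F(T,c^A) − F*(c^A))`, where
`c^A_e = c⁻_e` for `e ∈ A` and `c^A_e = c⁺_e` otherwise. -/
theorem minmax_eq_maxmin_interval
    {E : Type*} [Fintype E] [DecidableEq E] [Nonempty E]
    (𝓕 : Finset (Finset E)) (h𝓕 : 𝓕.Nonempty)
    (cm cp : E → ℝ) (hI : ∀ e, cm e ≤ cp e) :
    (⨅ p : (convexHull ℝ
        {x : E → ℝ | ∃ T ∈ 𝓕, x = fun e => if e ∈ T then (1 : ℝ) else 0} : Set (E → ℝ)),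
      𝓕.sup' h𝓕 (fun T =>
        (∑ e ∈ Finset.univ \ T, cp e * p.1 e) - ∑ e ∈ T, cm e * (1 - p.1 e)))
    =
    (⨆ w : stdSimplex ℝ {A // A ∈ 𝓕},
      𝓕.inf' h𝓕 (fun T =>
        ∑ A : {A // A ∈ 𝓕}, w.1 A *
          ((∑ e ∈ T, (if e ∈ A.1 then cm e else cp e))
            - 𝓕.inf' h𝓕 (fun T' => ∑ e ∈ T', if e ∈ A.1 then cm e else cp e)))) :=
  minmax_eq_maxmin_interval_general 𝓕 h𝓕 cm cp hI
end

section
/- For any feasible solution M ∈ 𝓕 under interval uncertainty, the maximum regret equals R_max(M) = ∑_{e∈M} c^+_e − F*(c^{M̄}), where c^{M̄} is the cost vector with c^{M̄}_e = c^+_e for e ∈ M and c^{M̄}_e = c^-_e for e ∉ M. -/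
open Finset

/-- For any `M ∈ 𝓕` under interval uncertainty,
`R_max(M) = ∑_{e∈M} c⁺_e − F*(c^{M̄})`, where `c^{M̄}_e = c⁺_e` for `e ∈ M` and
`c^{M̄}_e = c⁻_e` otherwise. -/
theorem max_regret_eq_upper_minus_Fstar_interval
    {E : Type*} [Fintype E] [DecidableEq E] [Nonempty E]
    (𝓕 : Finset (Finset E)) (h𝓕 : 𝓕.Nonempty)
    (cm cp : E → ℝ) (hI : ∀ e, cm e ≤ cp e)
    (M : Finset E) (hM : M ∈ 𝓕) :
    (⨆ c : {c : E → ℝ // ∀ e, cm e ≤ c e ∧ c e ≤ cp e},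
      (∑ e ∈ M, c.1 e) - 𝓕.inf' h𝓕 (fun T => ∑ e ∈ T, c.1 e))
    =
    (∑ e ∈ M, cp e)
      - 𝓕.inf' h𝓕 (fun T => ∑ e ∈ T, (if e ∈ M then cp e else cm e)) := by
  set cb : E → ℝ := fun e => if e ∈ M then cp e else cm e with hcb
  have hcbI : ∀ e, cm e ≤ cb e ∧ cb e ≤ cp e := by
    intro e; simp only [hcb]; split <;> exact ⟨by first | exact hI e | rfl,
      by first | exact hI e | rfl⟩
  haveI : Nonempty {c : E → ℝ // ∀ e, cm e ≤ c e ∧ c e ≤ cp e} := ⟨⟨cb, hcbI⟩⟩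
  have hsum : (∑ e ∈ M, cb e) = ∑ e ∈ M, cp e :=
    Finset.sum_congr rfl fun e he => by simp [hcb, he]
  have key : ∀ (c : E → ℝ), (∀ e, cm e ≤ c e ∧ c e ≤ cp e) → ∀ T : Finset E,
      (∑ e ∈ M, c e) - (∑ e ∈ T, c e) ≤ (∑ e ∈ M, cb e) - (∑ e ∈ T, cb e) := by
    intro c hc T
    have expand : ∀ d : E → ℝ, (∑ e ∈ M, d e) - (∑ e ∈ T, d e)
        = (∑ e ∈ M \ T, d e) - (∑ e ∈ T \ M, d e) := by
      intro d
      have hM' := Finset.sum_inter_add_sum_sdiff M T d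
      have hT' := Finset.sum_inter_add_sum_sdiff T M d
      rw [Finset.inter_comm T M] at hT'
      linarith
    rw [expand c, expand cb]
    apply sub_le_sub
    · apply Finset.sum_le_sum
      intro e he
      have : e ∈ M := (Finset.mem_sdiff.mp he).1
      simp [hcb, this, (hc e).2]
    · apply Finset.sum_le_sum
      intro e he
      have : e ∉ M := (Finset.mem_sdiff.mp he).2
      simp [hcb, this, (hc e).1]
  have hbound : ∀ c : {c : E → ℝ // ∀ e, cm e ≤ c e ∧ c e ≤ cp e},
      (∑ e ∈ M, c.1 e) - 𝓕.inf' h𝓕 (fun T => ∑ e ∈ T, c.1 e)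
      ≤ (∑ e ∈ M, cp e) - 𝓕.inf' h𝓕 (fun T => ∑ e ∈ T, cb e) := by
    intro c
    obtain ⟨T1, hT1, hT1eq⟩ := Finset.exists_mem_eq_inf' h𝓕 (fun T => ∑ e ∈ T, c.1 e)
    rw [hT1eq]
    have h2 := key c.1 c.2 T1
    have h3 : 𝓕.inf' h𝓕 (fun T => ∑ e ∈ T, cb e) ≤ ∑ e ∈ T1, cb e :=
      Finset.inf'_le _ hT1
    linarith
  apply le_antisymm
  · exact ciSup_le hbound
  · have hb : BddAbove (Set.range fun c : {c : E → ℝ // ∀ e, cm e ≤ c e ∧ c e ≤ cp e} =>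
        (∑ e ∈ M, c.1 e) - 𝓕.inf' h𝓕 (fun T => ∑ e ∈ T, c.1 e)) :=
      ⟨_, by rintro x ⟨c, rfl⟩; exact hbound c⟩
    have := le_ciSup hb ⟨cb, hcbI⟩
    rw [hsum] at this
    exact this
end

section
/- If M ∈ 𝓕 minimizes the midpoint cost ∑_{e∈T} (c^-_e + c^+_e)/2 over T ∈ 𝓕, then F*(c^M) = ∑_{e∈M} c^-_e, where c^M is the cost vector with c^M_e = c^-_e for e ∈ M and c^M_e = c^+_e for e ∉ M. -/
open Finset

/-- If `M ∈ 𝓕` minimizes the midpoint cost, then `F*(c^M) = ∑_{e∈M} c⁻_e`,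
where `c^M_e = c⁻_e` for `e ∈ M` and `c^M_e = c⁺_e` otherwise. -/
theorem midpoint_minimizer_Fstar_lower_interval
    {E : Type*} [Fintype E] [DecidableEq E] [Nonempty E]
    (𝓕 : Finset (Finset E)) (h𝓕 : 𝓕.Nonempty)
    (cm cp : E → ℝ) (hI : ∀ e, cm e ≤ cp e)
    (M : Finset E) (hM : M ∈ 𝓕)
    (hMmin : ∀ T ∈ 𝓕,
      (∑ e ∈ M, (cm e + cp e) / 2) ≤ ∑ e ∈ T, (cm e + cp e) / 2) :
    𝓕.inf' h𝓕 (fun T => ∑ e ∈ T, (if e ∈ M then cm e else cp e)) = ∑ e ∈ M, cm e := by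
  apply le_antisymm
  · calc 𝓕.inf' h𝓕 (fun T => ∑ e ∈ T, (if e ∈ M then cm e else cp e))
        ≤ ∑ e ∈ M, (if e ∈ M then cm e else cp e) := inf'_le _ hM
      _ = ∑ e ∈ M, cm e := Finset.sum_congr rfl (fun e he => by simp [he])
  · apply le_inf'
    intro T hT
    have hsplit : ∀ (S : Finset E) (f : E → ℝ),
        ∑ e ∈ S, f e = ∑ e ∈ S ∩ M, f e + ∑ e ∈ S \ M, f e := by
      intro S f
      rw [← Finset.sum_union (Finset.disjoint_sdiff_inter S M).symm,
        Finset.union_comm, Finset.sdiff_union_inter]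
    have hsplit' : ∀ (S : Finset E) (f : E → ℝ),
        ∑ e ∈ S, f e = ∑ e ∈ S ∩ T, f e + ∑ e ∈ S \ T, f e := by
      intro S f
      rw [← Finset.sum_union (Finset.disjoint_sdiff_inter S T).symm,
        Finset.union_comm, Finset.sdiff_union_inter]
    have key : ∑ e ∈ M \ T, cm e ≤ ∑ e ∈ T \ M, cp e := by
      have h1 := hMmin T hT
      rw [hsplit' M (fun e => (cm e + cp e) / 2),
        hsplit T (fun e => (cm e + cp e) / 2), Finset.inter_comm T M] at h1
      have h2 : ∑ e ∈ M \ T, (cm e + cp e) / 2 ≤ ∑ e ∈ T \ M, (cm e + cp e) / 2 := by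
        linarith
      calc ∑ e ∈ M \ T, cm e ≤ ∑ e ∈ M \ T, (cm e + cp e) / 2 :=
            Finset.sum_le_sum (fun e _ => by linarith [hI e])
        _ ≤ ∑ e ∈ T \ M, (cm e + cp e) / 2 := h2
        _ ≤ ∑ e ∈ T \ M, cp e :=
            Finset.sum_le_sum (fun e _ => by linarith [hI e])
    rw [hsplit T (fun e => if e ∈ M then cm e else cp e),
      hsplit' M cm, Finset.inter_comm M T]
    have e1 : ∑ e ∈ T ∩ M, (if e ∈ M then cm e else cp e) = ∑ e ∈ T ∩ M, cm e :=
      Finset.sum_congr rfl (fun e he => by simp [(Finset.mem_inter.mp he).2])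
    have e2 : ∑ e ∈ T \ M, (if e ∈ M then cm e else cp e) = ∑ e ∈ T \ M, cp e :=
      Finset.sum_congr rfl (fun e he => by simp [(Finset.mem_sdiff.mp he).2])
    rw [e1, e2]
    linarith
end

section
/- If M ∈ 𝓕 minimizes the midpoint cost ∑_{e∈T} (c^-_e + c^+_e)/2 over T ∈ 𝓕, then ∑_{e∈M} (c^-_e + c^+_e) − F*(c^M) − F*(c^{M̄}) = R_max(M), where c^M has c^M_e = c^-_e for e ∈ M and c^M_e = c^+_e for e ∉ M, and c^{M̄} has c^{M̄}_e = c^+_e for e ∈ M and c^{M̄}_e = c^-_e for e ∉ M. -/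
open Finset

/-- If `M ∈ 𝓕` minimizes the midpoint cost, then
`∑_{e∈M} (c⁻_e + c⁺_e) − F*(c^M) − F*(c^{M̄}) = R_max(M)`. -/
theorem midpoint_minimizer_regret_identity_interval
    {E : Type*} [Fintype E] [DecidableEq E] [Nonempty E]
    (𝓕 : Finset (Finset E)) (h𝓕 : 𝓕.Nonempty)
    (cm cp : E → ℝ) (hI : ∀ e, cm e ≤ cp e)
    (M : Finset E) (hM : M ∈ 𝓕)
    (hMmin : ∀ T ∈ 𝓕,
      (∑ e ∈ M, (cm e + cp e) / 2) ≤ ∑ e ∈ T, (cm e + cp e) / 2) :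
    (∑ e ∈ M, (cm e + cp e))
      - 𝓕.inf' h𝓕 (fun T => ∑ e ∈ T, (if e ∈ M then cm e else cp e))
      - 𝓕.inf' h𝓕 (fun T => ∑ e ∈ T, (if e ∈ M then cp e else cm e))
    =
    (⨆ c : {c : E → ℝ // ∀ e, cm e ≤ c e ∧ c e ≤ cp e},
      (∑ e ∈ M, c.1 e) - 𝓕.inf' h𝓕 (fun T => ∑ e ∈ T, c.1 e)) := by
  classical
  set cstar : E → ℝ := fun e => if e ∈ M then cp e else cm e with hcstar
  -- split an `if` sum
  have hsplit : ∀ (T : Finset E) (f g : E → ℝ),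
      (∑ e ∈ T, (if e ∈ M then f e else g e))
        = ∑ e ∈ T \ M, g e + ∑ e ∈ T ∩ M, f e := by
    intro T f g
    rw [← Finset.sum_sdiff (Finset.inter_subset_left (s₂ := M))]
    congr 1
    · rw [Finset.sdiff_inter_self_left]
      exact Finset.sum_congr rfl fun e he => if_neg (Finset.mem_sdiff.mp he).2
    · exact Finset.sum_congr rfl fun e he => if_pos (Finset.mem_inter.mp he).2
  -- key inequality from midpoint optimality
  have key : ∀ T ∈ 𝓕, ∑ e ∈ M \ T, cm e ≤ ∑ e ∈ T \ M, cp e := by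
    intro T hT
    have h1 := hMmin T hT
    have h2 : ∑ e ∈ M \ T, (cm e + cp e) / 2 ≤ ∑ e ∈ T \ M, (cm e + cp e) / 2 := by
      have := Finset.sum_sdiff_sub_sum_sdiff (s₁ := T) (s₂ := M)
        (f := fun e => (cm e + cp e) / 2)
      linarith
    have h3 : ∑ e ∈ M \ T, cm e ≤ ∑ e ∈ M \ T, (cm e + cp e) / 2 :=
      Finset.sum_le_sum fun e _ => by linarith [hI e]
    have h4 : ∑ e ∈ T \ M, (cm e + cp e) / 2 ≤ ∑ e ∈ T \ M, cp e :=
      Finset.sum_le_sum fun e _ => by linarith [hI e]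
    linarith
  -- the first inf equals ∑_M cm
  have hinf1 : 𝓕.inf' h𝓕 (fun T => ∑ e ∈ T, (if e ∈ M then cm e else cp e))
      = ∑ e ∈ M, cm e := by
    apply le_antisymm
    · refine le_trans (Finset.inf'_le _ hM) ?_
      rw [hsplit M cm cp, Finset.sdiff_self, Finset.inter_self, Finset.sum_empty, zero_add]
    · apply Finset.le_inf'
      intro T hT
      rw [hsplit T cm cp]
      have hMsplit : ∑ e ∈ M, cm e = ∑ e ∈ M \ T, cm e + ∑ e ∈ M ∩ T, cm e := by
        rw [← Finset.sum_sdiff (Finset.inter_subset_left (s₂ := T))]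
        congr 1
        rw [Finset.sdiff_inter_self_left]
      rw [hMsplit, Finset.inter_comm M T]
      have := key T hT
      linarith
  -- cstar sums
  have hcsM : ∑ e ∈ M, cstar e = ∑ e ∈ M, cp e :=
    Finset.sum_congr rfl fun e he => if_pos he
  have hcsT : ∀ T : Finset E, ∑ e ∈ T, cstar e
      = ∑ e ∈ T, (if e ∈ M then cp e else cm e) := fun T => rfl
  have hcsmem : ∀ e, cm e ≤ cstar e ∧ cstar e ≤ cp e := by
    intro e
    by_cases he : e ∈ M <;> simp [hcstar, he, hI e, le_refl]
  set gval : ℝ := ∑ e ∈ M, cp e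
      - 𝓕.inf' h𝓕 (fun T => ∑ e ∈ T, (if e ∈ M then cp e else cm e)) with hgval
  -- every feasible c gives regret ≤ gval
  have hub : ∀ c : {c : E → ℝ // ∀ e, cm e ≤ c e ∧ c e ≤ cp e},
      (∑ e ∈ M, c.1 e) - 𝓕.inf' h𝓕 (fun T => ∑ e ∈ T, c.1 e) ≤ gval := by
    intro c
    obtain ⟨T₀, hT₀, hT₀eq⟩ := Finset.exists_mem_eq_inf' h𝓕 (fun T => ∑ e ∈ T, c.1 e)
    rw [hT₀eq]
    have hdiff1 : (∑ e ∈ M, c.1 e) - ∑ e ∈ T₀, c.1 e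
        = ∑ e ∈ M \ T₀, c.1 e - ∑ e ∈ T₀ \ M, c.1 e :=
      (Finset.sum_sdiff_sub_sum_sdiff (s₁ := T₀) (s₂ := M)).symm
    have hdiff2 : (∑ e ∈ M, cstar e) - ∑ e ∈ T₀, cstar e
        = ∑ e ∈ M \ T₀, cstar e - ∑ e ∈ T₀ \ M, cstar e :=
      (Finset.sum_sdiff_sub_sum_sdiff (s₁ := T₀) (s₂ := M)).symm
    have h5 : ∑ e ∈ M \ T₀, c.1 e ≤ ∑ e ∈ M \ T₀, cstar e := by
      apply Finset.sum_le_sum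
      intro e he
      have heM := (Finset.mem_sdiff.mp he).1
      simp only [hcstar, if_pos heM]
      exact (c.2 e).2
    have h6 : ∑ e ∈ T₀ \ M, cstar e ≤ ∑ e ∈ T₀ \ M, c.1 e := by
      apply Finset.sum_le_sum
      intro e he
      have heM := (Finset.mem_sdiff.mp he).2
      simp only [hcstar, if_neg heM]
      exact (c.2 e).1
    have h7 : 𝓕.inf' h𝓕 (fun T => ∑ e ∈ T, (if e ∈ M then cp e else cm e))
        ≤ ∑ e ∈ T₀, cstar e := by
      rw [hcsT T₀]; exact Finset.inf'_le _ hT₀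
    have := hcsM
    rw [hgval]
    linarith
  have hne : Nonempty {c : E → ℝ // ∀ e, cm e ≤ c e ∧ c e ≤ cp e} :=
    ⟨⟨cstar, hcsmem⟩⟩
  have hbdd : BddAbove (Set.range fun c : {c : E → ℝ // ∀ e, cm e ≤ c e ∧ c e ≤ cp e} =>
      (∑ e ∈ M, c.1 e) - 𝓕.inf' h𝓕 (fun T => ∑ e ∈ T, c.1 e)) :=
    ⟨gval, by rintro x ⟨c, rfl⟩; exact hub c⟩
  have hsup : (⨆ c : {c : E → ℝ // ∀ e, cm e ≤ c e ∧ c e ≤ cp e},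
      (∑ e ∈ M, c.1 e) - 𝓕.inf' h𝓕 (fun T => ∑ e ∈ T, c.1 e)) = gval := by
    apply le_antisymm
    · exact ciSup_le hub
    · have := le_ciSup hbdd ⟨cstar, hcsmem⟩
      calc gval = (∑ e ∈ M, cstar e)
            - 𝓕.inf' h𝓕 (fun T => ∑ e ∈ T, cstar e) := by
              rw [hgval, hcsM]
        _ ≤ _ := le_ciSup hbdd ⟨cstar, hcsmem⟩
  rw [hsup, hinf1, hgval, Finset.sum_add_distrib]
  ring
end

section
/- Midpoint-cost solutions give a 2-approximation for minmax regret under interval uncertainty: if M ∈ 𝓕 minimizes ∑_{e∈T} (c^-_e + c^+_e)/2 over T ∈ 𝓕, then R_max(M) ≤ 2 · Z_R; in particular, since Z_R ≤ Z_D, the maximum regret of M is at most 2 times the deterministic minmax regret Z_D. -/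
open Finset

private lemma sum_expand {E : Type*} [Fintype E] [DecidableEq E] (A : Finset E) (f : E → ℝ) :
    ∑ e ∈ A, f e = ∑ e : E, if e ∈ A then f e else 0 := by
  simp

/-- Core inequality: for every scenario `c` in the interval box and every `p` in the
convex hull of characteristic vectors, the regret of the midpoint solution `M` under `c`
is at most twice the randomized objective at `p`. -/
private lemma core_ineq {E : Type*} [Fintype E] [DecidableEq E]
    (𝓕 : Finset (Finset E)) (h𝓕 : 𝓕.Nonempty)
    (cm cp : E → ℝ) (hI : ∀ e, cm e ≤ cp e)
    (M : Finset E) (hM : M ∈ 𝓕)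
    (hMmin : ∀ T ∈ 𝓕,
      (∑ e ∈ M, (cm e + cp e) / 2) ≤ ∑ e ∈ T, (cm e + cp e) / 2)
    (c : E → ℝ) (hc : ∀ e, cm e ≤ c e ∧ c e ≤ cp e)
    (p : E → ℝ)
    (hp : p ∈ convexHull ℝ
      {x : E → ℝ | ∃ T ∈ 𝓕, x = fun e => if e ∈ T then (1 : ℝ) else 0}) :
    (∑ e ∈ M, c e) - 𝓕.inf' h𝓕 (fun T => ∑ e ∈ T, c e)
      ≤ 2 * 𝓕.sup' h𝓕 (fun T =>
          (∑ e ∈ Finset.univ \ T, cp e * p e) - ∑ e ∈ T, cm e * (1 - p e)) := by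
  obtain ⟨T0, hT0, hT0eq⟩ := Finset.exists_mem_eq_inf' h𝓕 (fun T => ∑ e ∈ T, c e)
  rw [hT0eq]
  -- Step 1: bound the regret by the extreme-scenario quantity A
  have step1 : (∑ e ∈ M, c e) - (∑ e ∈ T0, c e)
      ≤ (∑ e ∈ M \ T0, cp e) - ∑ e ∈ T0 \ M, cm e := by
    rw [sum_expand M c, sum_expand T0 c, sum_expand (M \ T0) cp, sum_expand (T0 \ M) cm,
      ← Finset.sum_sub_distrib, ← Finset.sum_sub_distrib]
    apply Finset.sum_le_sum
    intro e _
    by_cases hm : e ∈ M <;> by_cases ht : e ∈ T0 <;>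
      simp [hm, ht] <;> linarith [(hc e).1, (hc e).2, hI e]
  -- Step 2: A is at most g p M + g p T0, via convexity
  have step2 : (∑ e ∈ M \ T0, cp e) - (∑ e ∈ T0 \ M, cm e)
      ≤ ((∑ e ∈ Finset.univ \ M, cp e * p e) - ∑ e ∈ M, cm e * (1 - p e))
        + ((∑ e ∈ Finset.univ \ T0, cp e * p e) - ∑ e ∈ T0, cm e * (1 - p e)) := by
    have hsub : {x : E → ℝ | ∃ T ∈ 𝓕, x = fun e => if e ∈ T then (1 : ℝ) else 0} ⊆
        {q : E → ℝ | (∑ e ∈ M \ T0, cp e) - (∑ e ∈ T0 \ M, cm e)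
          ≤ ((∑ e ∈ Finset.univ \ M, cp e * q e) - ∑ e ∈ M, cm e * (1 - q e))
            + ((∑ e ∈ Finset.univ \ T0, cp e * q e) - ∑ e ∈ T0, cm e * (1 - q e))} := by
      rintro x ⟨S, hS, rfl⟩
      simp only [Set.mem_setOf_eq]
      have hw : ∑ e ∈ M, (cm e + cp e) ≤ ∑ e ∈ S, (cm e + cp e) := by
        have h := hMmin S hS
        rw [← Finset.sum_div, ← Finset.sum_div] at h
        linarith
      have hnn : (0:ℝ) ≤ ∑ e : E,
          ((if e ∈ M ∧ e ∈ T0 ∧ e ∉ S then cp e - cm e else 0)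
            + (if e ∈ S ∧ e ∉ M ∧ e ∉ T0 then cp e - cm e else 0)) := by
        apply Finset.sum_nonneg
        intro e _
        have := hI e
        apply add_nonneg <;> split_ifs <;> linarith
      have hident :
          ((∑ e ∈ Finset.univ \ M, cp e * (if e ∈ S then (1:ℝ) else 0))
              - ∑ e ∈ M, cm e * (1 - (if e ∈ S then (1:ℝ) else 0)))
            + ((∑ e ∈ Finset.univ \ T0, cp e * (if e ∈ S then (1:ℝ) else 0))
              - ∑ e ∈ T0, cm e * (1 - (if e ∈ S then (1:ℝ) else 0)))
          = ((∑ e ∈ M \ T0, cp e) - ∑ e ∈ T0 \ M, cm e)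
            + (∑ e ∈ S, (cm e + cp e) - ∑ e ∈ M, (cm e + cp e))
            + ∑ e : E, ((if e ∈ M ∧ e ∈ T0 ∧ e ∉ S then cp e - cm e else 0)
              + (if e ∈ S ∧ e ∉ M ∧ e ∉ T0 then cp e - cm e else 0)) := by
        rw [sum_expand (Finset.univ \ M) (fun e => cp e * (if e ∈ S then (1:ℝ) else 0)),
          sum_expand M (fun e => cm e * (1 - (if e ∈ S then (1:ℝ) else 0))),
          sum_expand (Finset.univ \ T0) (fun e => cp e * (if e ∈ S then (1:ℝ) else 0)),
          sum_expand T0 (fun e => cm e * (1 - (if e ∈ S then (1:ℝ) else 0))),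
          sum_expand (M \ T0) cp, sum_expand (T0 \ M) cm,
          sum_expand S (fun e => cm e + cp e), sum_expand M (fun e => cm e + cp e)]
        simp only [← Finset.sum_sub_distrib, ← Finset.sum_add_distrib]
        apply Finset.sum_congr rfl
        intro e _
        by_cases hm : e ∈ M <;> by_cases ht : e ∈ T0 <;> by_cases hs : e ∈ S <;>
          simp [hm, ht, hs] <;> ring
      linarith
    have hconv : Convex ℝ
        {q : E → ℝ | (∑ e ∈ M \ T0, cp e) - (∑ e ∈ T0 \ M, cm e)
          ≤ ((∑ e ∈ Finset.univ \ M, cp e * q e) - ∑ e ∈ M, cm e * (1 - q e))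
            + ((∑ e ∈ Finset.univ \ T0, cp e * q e) - ∑ e ∈ T0, cm e * (1 - q e))} := by
      intro q1 hq1 q2 hq2 a b ha hb hab
      simp only [Set.mem_setOf_eq] at hq1 hq2 ⊢
      have hb' : b = 1 - a := by linarith
      subst hb'
      have key : ∀ T : Finset E,
          ((∑ e ∈ Finset.univ \ T, cp e * (a • q1 + (1 - a) • q2) e)
            - ∑ e ∈ T, cm e * (1 - (a • q1 + (1 - a) • q2) e))
          = a * ((∑ e ∈ Finset.univ \ T, cp e * q1 e) - ∑ e ∈ T, cm e * (1 - q1 e))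
            + (1 - a) * ((∑ e ∈ Finset.univ \ T, cp e * q2 e)
              - ∑ e ∈ T, cm e * (1 - q2 e)) := by
        intro T
        simp only [Pi.add_apply, Pi.smul_apply, smul_eq_mul]
        have l1 : ∑ e ∈ Finset.univ \ T, cp e * (a * q1 e + (1 - a) * q2 e)
            = a * ∑ e ∈ Finset.univ \ T, cp e * q1 e
              + (1 - a) * ∑ e ∈ Finset.univ \ T, cp e * q2 e := by
          rw [Finset.mul_sum, Finset.mul_sum, ← Finset.sum_add_distrib]
          exact Finset.sum_congr rfl fun e _ => by ring
        have l2 : ∑ e ∈ T, cm e * (1 - (a * q1 e + (1 - a) * q2 e))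
            = a * ∑ e ∈ T, cm e * (1 - q1 e)
              + (1 - a) * ∑ e ∈ T, cm e * (1 - q2 e) := by
          rw [Finset.mul_sum, Finset.mul_sum, ← Finset.sum_add_distrib]
          exact Finset.sum_congr rfl fun e _ => by ring
        rw [l1, l2]; ring
      rw [key M, key T0]
      have m1 := mul_le_mul_of_nonneg_left hq1 ha
      have m2 := mul_le_mul_of_nonneg_left hq2 hb
      nlinarith [m1, m2]
    exact convexHull_min hsub hconv hp
  -- Step 3: both values are below the sup'
  have s3 : ((∑ e ∈ Finset.univ \ M, cp e * p e) - ∑ e ∈ M, cm e * (1 - p e))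
      ≤ 𝓕.sup' h𝓕 (fun T =>
        (∑ e ∈ Finset.univ \ T, cp e * p e) - ∑ e ∈ T, cm e * (1 - p e)) :=
    Finset.le_sup' (fun T : Finset E => (∑ e ∈ Finset.univ \ T, cp e * p e) - ∑ e ∈ T, cm e * (1 - p e)) hM
  have s4 : ((∑ e ∈ Finset.univ \ T0, cp e * p e) - ∑ e ∈ T0, cm e * (1 - p e))
      ≤ 𝓕.sup' h𝓕 (fun T =>
        (∑ e ∈ Finset.univ \ T, cp e * p e) - ∑ e ∈ T, cm e * (1 - p e)) :=
    Finset.le_sup' (fun T : Finset E => (∑ e ∈ Finset.univ \ T, cp e * p e) - ∑ e ∈ T, cm e * (1 - p e)) hT0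
  linarith

/-- Midpoint-cost solutions give a 2-approximation for minmax regret under
interval uncertainty: `R_max(M) ≤ 2·Z_R`, and in particular `R_max(M) ≤ 2·Z_D`. -/
theorem midpoint_two_approximation_interval
    {E : Type*} [Fintype E] [DecidableEq E] [Nonempty E]
    (𝓕 : Finset (Finset E)) (h𝓕 : 𝓕.Nonempty)
    (cm cp : E → ℝ) (hI : ∀ e, cm e ≤ cp e)
    (M : Finset E) (hM : M ∈ 𝓕)
    (hMmin : ∀ T ∈ 𝓕,
      (∑ e ∈ M, (cm e + cp e) / 2) ≤ ∑ e ∈ T, (cm e + cp e) / 2) :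
    (⨆ c : {c : E → ℝ // ∀ e, cm e ≤ c e ∧ c e ≤ cp e},
        (∑ e ∈ M, c.1 e) - 𝓕.inf' h𝓕 (fun T => ∑ e ∈ T, c.1 e))
      ≤ 2 *
        (⨅ p : (convexHull ℝ
            {x : E → ℝ | ∃ T ∈ 𝓕, x = fun e => if e ∈ T then (1 : ℝ) else 0} : Set (E → ℝ)),
          𝓕.sup' h𝓕 (fun T =>
            (∑ e ∈ Finset.univ \ T, cp e * p.1 e) - ∑ e ∈ T, cm e * (1 - p.1 e)))
    ∧
    (⨆ c : {c : E → ℝ // ∀ e, cm e ≤ c e ∧ c e ≤ cp e},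
        (∑ e ∈ M, c.1 e) - 𝓕.inf' h𝓕 (fun T => ∑ e ∈ T, c.1 e))
      ≤ 2 *
        𝓕.inf' h𝓕 (fun T =>
          ⨆ c : {c : E → ℝ // ∀ e, cm e ≤ c e ∧ c e ≤ cp e},
            (∑ e ∈ T, c.1 e) - 𝓕.inf' h𝓕 (fun T' => ∑ e ∈ T', c.1 e)) := by
  haveI hne_c : Nonempty {c : E → ℝ // ∀ e, cm e ≤ c e ∧ c e ≤ cp e} :=
    ⟨⟨cm, fun e => ⟨le_rfl, hI e⟩⟩⟩
  constructor
  · -- R_max(M) ≤ 2 Z_R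
    haveI hne_p : Nonempty (convexHull ℝ
        {x : E → ℝ | ∃ T ∈ 𝓕, x = fun e => if e ∈ T then (1 : ℝ) else 0} : Set (E → ℝ)) :=
      ⟨⟨fun e => if e ∈ M then (1:ℝ) else 0, subset_convexHull ℝ _ ⟨M, hM, rfl⟩⟩⟩
    apply ciSup_le
    intro c
    have h2 : ∀ p : (convexHull ℝ
        {x : E → ℝ | ∃ T ∈ 𝓕, x = fun e => if e ∈ T then (1 : ℝ) else 0} : Set (E → ℝ)),
        (∑ e ∈ M, c.1 e) - 𝓕.inf' h𝓕 (fun T => ∑ e ∈ T, c.1 e)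
          ≤ 2 * 𝓕.sup' h𝓕 (fun T =>
            (∑ e ∈ Finset.univ \ T, cp e * p.1 e) - ∑ e ∈ T, cm e * (1 - p.1 e)) :=
      fun p => core_ineq 𝓕 h𝓕 cm cp hI M hM hMmin c.1 c.2 p.1 p.2
    have h3 : ((∑ e ∈ M, c.1 e) - 𝓕.inf' h𝓕 (fun T => ∑ e ∈ T, c.1 e)) / 2
        ≤ ⨅ p : (convexHull ℝ
            {x : E → ℝ | ∃ T ∈ 𝓕, x = fun e => if e ∈ T then (1 : ℝ) else 0} : Set (E → ℝ)),
          𝓕.sup' h𝓕 (fun T =>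
            (∑ e ∈ Finset.univ \ T, cp e * p.1 e) - ∑ e ∈ T, cm e * (1 - p.1 e)) :=
      le_ciInf (fun p => by linarith [h2 p])
    linarith
  · -- R_max(M) ≤ 2 Z_D
    apply ciSup_le
    intro c
    obtain ⟨T1, hT1, hinfeq⟩ := Finset.exists_mem_eq_inf' h𝓕
      (fun T => ⨆ c' : {c' : E → ℝ // ∀ e, cm e ≤ c' e ∧ c' e ≤ cp e},
        (∑ e ∈ T, c'.1 e) - 𝓕.inf' h𝓕 (fun T' => ∑ e ∈ T', c'.1 e))
    rw [hinfeq]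
    -- worst-case scenario for competitor T1
    have hcTmem : ∀ e, cm e ≤ (if e ∈ T1 then cp e else cm e)
        ∧ (if e ∈ T1 then cp e else cm e) ≤ cp e := by
      intro e
      constructor <;> by_cases h : e ∈ T1 <;> simp [h, hI e]
    have hchimem : (fun e => if e ∈ T1 then (1:ℝ) else 0) ∈ convexHull ℝ
        {x : E → ℝ | ∃ T ∈ 𝓕, x = fun e => if e ∈ T then (1 : ℝ) else 0} :=
      subset_convexHull ℝ _ ⟨T1, hT1, rfl⟩
    have hcore : (∑ e ∈ M, c.1 e) - 𝓕.inf' h𝓕 (fun T => ∑ e ∈ T, c.1 e)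
        ≤ 2 * 𝓕.sup' h𝓕 (fun S =>
          (∑ e ∈ Finset.univ \ S, cp e * (if e ∈ T1 then (1:ℝ) else 0))
            - ∑ e ∈ S, cm e * (1 - if e ∈ T1 then (1:ℝ) else 0)) :=
      core_ineq 𝓕 h𝓕 cm cp hI M hM hMmin c.1 c.2 _ hchimem
    have hbdd : BddAbove (Set.range fun c' : {c' : E → ℝ // ∀ e, cm e ≤ c' e ∧ c' e ≤ cp e} =>
        (∑ e ∈ T1, c'.1 e) - 𝓕.inf' h𝓕 (fun T' => ∑ e ∈ T', c'.1 e)) := by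
      refine ⟨(∑ e ∈ T1, cp e) - 𝓕.inf' h𝓕 (fun T' => ∑ e ∈ T', cm e), ?_⟩
      rintro y ⟨c', rfl⟩
      have h6 : ∑ e ∈ T1, c'.1 e ≤ ∑ e ∈ T1, cp e :=
        Finset.sum_le_sum fun e _ => (c'.2 e).2
      have h7 : 𝓕.inf' h𝓕 (fun T' => ∑ e ∈ T', cm e)
          ≤ 𝓕.inf' h𝓕 (fun T' => ∑ e ∈ T', c'.1 e) := by
        apply Finset.le_inf'
        intro T' hT'
        exact le_trans (Finset.inf'_le _ hT')
          (Finset.sum_le_sum fun e _ => (c'.2 e).1)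
      simp only []
      linarith
    have hsup : 𝓕.sup' h𝓕 (fun S =>
        (∑ e ∈ Finset.univ \ S, cp e * (if e ∈ T1 then (1:ℝ) else 0))
          - ∑ e ∈ S, cm e * (1 - if e ∈ T1 then (1:ℝ) else 0))
        ≤ ⨆ c' : {c' : E → ℝ // ∀ e, cm e ≤ c' e ∧ c' e ≤ cp e},
          (∑ e ∈ T1, c'.1 e) - 𝓕.inf' h𝓕 (fun T' => ∑ e ∈ T', c'.1 e) := by
      apply Finset.sup'_le
      intro S hS
      have hle := le_ciSup hbdd ⟨fun e => if e ∈ T1 then cp e else cm e, hcTmem⟩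
      simp only [] at hle
      have h5 : (∑ e ∈ Finset.univ \ S, cp e * (if e ∈ T1 then (1:ℝ) else 0))
          - ∑ e ∈ S, cm e * (1 - if e ∈ T1 then (1:ℝ) else 0)
          ≤ (∑ e ∈ T1, (if e ∈ T1 then cp e else cm e))
            - 𝓕.inf' h𝓕 (fun T' => ∑ e ∈ T', (if e ∈ T1 then cp e else cm e)) := by
        have hgchi : (∑ e ∈ Finset.univ \ S, cp e * (if e ∈ T1 then (1:ℝ) else 0))
            - ∑ e ∈ S, cm e * (1 - if e ∈ T1 then (1:ℝ) else 0)
            = (∑ e ∈ T1, (if e ∈ T1 then cp e else cm e))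
              - ∑ e ∈ S, (if e ∈ T1 then cp e else cm e) := by
          rw [sum_expand (Finset.univ \ S) (fun e => cp e * (if e ∈ T1 then (1:ℝ) else 0)),
            sum_expand S (fun e => cm e * (1 - if e ∈ T1 then (1:ℝ) else 0)),
            sum_expand T1 (fun e => if e ∈ T1 then cp e else cm e),
            sum_expand S (fun e => if e ∈ T1 then cp e else cm e),
            ← Finset.sum_sub_distrib, ← Finset.sum_sub_distrib]
          apply Finset.sum_congr rfl
          intro e _
          by_cases ht : e ∈ T1 <;> by_cases hs : e ∈ S <;> simp [ht, hs]
        rw [hgchi]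
        have := Finset.inf'_le (fun T' => ∑ e ∈ T', (if e ∈ T1 then cp e else cm e)) hS
        linarith
      linarith
    linarith
end

section
/- For interval uncertainty, the randomized minmax regret is at least half the deterministic minmax regret: Z_R ≥ Z_D / 2. -/
open Finset

/-- For a linear functional `w` and a point `p` of the convex hull of characteristic
vectors of members of `𝓕`, some member `S` of `𝓕` satisfies `∑_{e∈S} w e ≤ ∑_e w e * p e`. -/
lemma hull_key_aux {E : Type*} [Fintype E] [DecidableEq E]
    (𝓕 : Finset (Finset E)) (h𝓕 : 𝓕.Nonempty) (w : E → ℝ) (p : E → ℝ)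
    (hp : p ∈ convexHull ℝ
      {x : E → ℝ | ∃ T ∈ 𝓕, x = fun e => if e ∈ T then (1 : ℝ) else 0}) :
    ∃ S ∈ 𝓕, ∑ e ∈ S, w e ≤ ∑ e, w e * p e := by
  have hlin : IsLinearMap ℝ (fun x : E → ℝ => ∑ e, w e * x e) := by
    constructor
    · intro x y
      simp [mul_add, Finset.sum_add_distrib]
    · intro c x
      simp only [Pi.smul_apply, smul_eq_mul, Finset.mul_sum]
      exact Finset.sum_congr rfl fun e _ => by ring
  set m := 𝓕.inf' h𝓕 (fun T => ∑ e ∈ T, w e) with hm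
  have hsub : {x : E → ℝ | ∃ T ∈ 𝓕, x = fun e => if e ∈ T then (1 : ℝ) else 0} ⊆
      {x : E → ℝ | m ≤ ∑ e, w e * x e} := by
    rintro x ⟨T, hT, rfl⟩
    have hx : ∑ e, w e * (if e ∈ T then (1 : ℝ) else 0) = ∑ e ∈ T, w e := by
      rw [Finset.sum_congr rfl (fun e _ => by rw [mul_ite, mul_one, mul_zero]),
        Finset.sum_ite_mem, Finset.univ_inter]
    simp only [Set.mem_setOf_eq, hx]
    exact Finset.inf'_le _ hT
  have hmem := convexHull_min hsub (convex_halfSpace_ge hlin m) hp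
  obtain ⟨S, hS, hSeq⟩ := Finset.exists_mem_eq_inf' h𝓕 (fun T => ∑ e ∈ T, w e)
  refine ⟨S, hS, ?_⟩
  have : m = ∑ e ∈ S, w e := hSeq
  rw [← this]
  exact hmem

/-- Coordinates of a point of the convex hull of characteristic vectors lie in `[0,1]`. -/
lemma hull_bounds_aux {E : Type*} [Fintype E] [DecidableEq E]
    (𝓕 : Finset (Finset E)) (p : E → ℝ)
    (hp : p ∈ convexHull ℝ
      {x : E → ℝ | ∃ T ∈ 𝓕, x = fun e => if e ∈ T then (1 : ℝ) else 0})
    (e : E) : 0 ≤ p e ∧ p e ≤ 1 := by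
  have hlin : IsLinearMap ℝ (fun x : E → ℝ => x e) := ⟨fun x y => rfl, fun c x => rfl⟩
  constructor
  · have hsub : {x : E → ℝ | ∃ T ∈ 𝓕, x = fun e => if e ∈ T then (1 : ℝ) else 0} ⊆
        {x : E → ℝ | (0 : ℝ) ≤ x e} := by
      rintro x ⟨T, hT, rfl⟩
      simp only [Set.mem_setOf_eq]
      split_ifs <;> norm_num
    exact convexHull_min hsub (convex_halfSpace_ge hlin 0) hp
  · have hsub : {x : E → ℝ | ∃ T ∈ 𝓕, x = fun e => if e ∈ T then (1 : ℝ) else 0} ⊆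
        {x : E → ℝ | x e ≤ (1 : ℝ)} := by
      rintro x ⟨T, hT, rfl⟩
      simp only [Set.mem_setOf_eq]
      split_ifs <;> norm_num
    exact convexHull_min hsub (convex_halfSpace_le hlin 1) hp

/-- For interval uncertainty, the randomized minmax regret is at least half
the deterministic minmax regret: `Z_R ≥ Z_D / 2`. -/
theorem ZR_ge_ZD_div_two_interval
    {E : Type*} [Fintype E] [DecidableEq E] [Nonempty E]
    (𝓕 : Finset (Finset E)) (h𝓕 : 𝓕.Nonempty)
    (cm cp : E → ℝ) (hI : ∀ e, cm e ≤ cp e) :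
    (⨅ p : (convexHull ℝ
        {x : E → ℝ | ∃ T ∈ 𝓕, x = fun e => if e ∈ T then (1 : ℝ) else 0} : Set (E → ℝ)),
      𝓕.sup' h𝓕 (fun T =>
        (∑ e ∈ Finset.univ \ T, cp e * p.1 e) - ∑ e ∈ T, cm e * (1 - p.1 e)))
    ≥
    (𝓕.inf' h𝓕 (fun T =>
      ⨆ c : {c : E → ℝ // ∀ e, cm e ≤ c e ∧ c e ≤ cp e},
        (∑ e ∈ T, c.1 e) - 𝓕.inf' h𝓕 (fun T' => ∑ e ∈ T', c.1 e))) / 2 := by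
  classical
  obtain ⟨T₁, hT₁⟩ := id h𝓕
  haveI : Nonempty {c : E → ℝ // ∀ e, cm e ≤ c e ∧ c e ≤ cp e} :=
    ⟨⟨cm, fun e => ⟨le_rfl, hI e⟩⟩⟩
  haveI : Nonempty (convexHull ℝ
      {x : E → ℝ | ∃ T ∈ 𝓕, x = fun e => if e ∈ T then (1 : ℝ) else 0} : Set (E → ℝ)) :=
    ⟨⟨_, subset_convexHull ℝ _ ⟨T₁, hT₁, rfl⟩⟩⟩
  rw [ge_iff_le]
  apply le_ciInf
  intro pp
  have hp : (pp : E → ℝ) ∈ convexHull ℝ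
      {x : E → ℝ | ∃ T ∈ 𝓕, x = fun e => if e ∈ T then (1 : ℝ) else 0} := pp.2
  set p : E → ℝ := (pp : E → ℝ) with hpdef
  have hpe : ∀ e, 0 ≤ p e ∧ p e ≤ 1 := fun e => hull_bounds_aux 𝓕 p hp e
  set ch : E → ℝ := fun e => cp e * p e + cm e * (1 - p e) with hch
  set g : Finset E → ℝ := fun T =>
    (∑ e ∈ Finset.univ \ T, cp e * p e) - ∑ e ∈ T, cm e * (1 - p e) with hgdef
  set Φ := 𝓕.sup' h𝓕 g with hΦ
  -- identity: g T = ∑ cp p − ∑_{T} ch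
  have hg : ∀ T : Finset E, g T = (∑ e, cp e * p e) - ∑ e ∈ T, ch e := by
    intro T
    simp only [hgdef, hch]
    rw [Finset.sum_sdiff_eq_sub (Finset.subset_univ T), sub_sub, ← Finset.sum_add_distrib]
  -- (†): Φ ≥ ∑ d p (1 − p)
  obtain ⟨S₂, hS₂, hS₂le⟩ := hull_key_aux 𝓕 h𝓕 ch p hp
  have hI1 : ∑ e, (cp e - cm e) * (p e * (1 - p e)) ≤ Φ := by
    have h1 : ∑ e, (cp e - cm e) * (p e * (1 - p e)) =
        (∑ e, cp e * p e) - ∑ e, ch e * p e := by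
      rw [← Finset.sum_sub_distrib]
      exact Finset.sum_congr rfl fun e _ => by simp only [hch]; ring
    have h2 : g S₂ ≤ Φ := Finset.le_sup' g hS₂
    rw [hg S₂] at h2
    linarith
  -- choose the good deterministic solution S
  obtain ⟨S, hS, hSle⟩ := hull_key_aux 𝓕 h𝓕 (fun e => cp e - (cp e - cm e) * p e) p hp
  have expand : ∀ (T : Finset E) (f : E → ℝ),
      ∑ e ∈ T, f e = ∑ e, if e ∈ T then f e else 0 := by
    intro T f
    rw [Finset.sum_ite_mem, Finset.univ_inter]
  have expand2 : ∀ (T : Finset E) (f : E → ℝ),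
      ∑ e ∈ Finset.univ \ T, f e = ∑ e, if e ∈ T then 0 else f e := by
    intro T f
    rw [Finset.sum_sdiff_eq_sub (Finset.subset_univ T), expand T f,
      ← Finset.sum_sub_distrib]
    exact Finset.sum_congr rfl fun e _ => by split_ifs <;> ring
  have hRS : (⨆ c : {c : E → ℝ // ∀ e, cm e ≤ c e ∧ c e ≤ cp e},
      (∑ e ∈ S, c.1 e) - 𝓕.inf' h𝓕 (fun T' => ∑ e ∈ T', c.1 e)) ≤ 2 * Φ := by
    apply ciSup_le
    rintro ⟨c, hc⟩
    show (∑ e ∈ S, c e) - 𝓕.inf' h𝓕 (fun T' => ∑ e ∈ T', c e) ≤ 2 * Φ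
    obtain ⟨T₀, hT₀, hT₀eq⟩ := Finset.exists_mem_eq_inf' h𝓕 (fun T' => ∑ e ∈ T', c e)
    rw [hT₀eq]
    -- key pointwise bound
    have key : (∑ e ∈ S, c e) - (∑ e ∈ T₀, c e) ≤
        ((∑ e ∈ S, cp e) - ∑ e ∈ T₀, ch e) +
          ∑ e ∈ Finset.univ \ S, (cp e - cm e) * p e := by
      rw [expand S c, expand T₀ c, expand S cp, expand T₀ ch,
        expand2 S (fun e => (cp e - cm e) * p e),
        ← Finset.sum_sub_distrib, ← Finset.sum_sub_distrib, ← Finset.sum_add_distrib]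
      apply Finset.sum_le_sum
      intro e _
      obtain ⟨hp0, hp1⟩ := hpe e
      obtain ⟨hc1, hc2⟩ := hc e
      have hd := hI e
      simp only [hch]
      split_ifs <;>
        nlinarith [mul_nonneg (sub_nonneg.2 hd) (sub_nonneg.2 hp1),
          mul_nonneg (sub_nonneg.2 hd) hp0]
    have hgT₀ : g T₀ ≤ Φ := Finset.le_sup' g hT₀
    rw [hg T₀] at hgT₀
    have c1 : ∑ e ∈ S, cp e =
        (∑ e ∈ S, (cp e - (cp e - cm e) * p e)) + ∑ e ∈ S, (cp e - cm e) * p e := by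
      rw [← Finset.sum_add_distrib]
      exact Finset.sum_congr rfl fun e _ => by ring
    have c2 : (∑ e ∈ S, (cp e - cm e) * p e) +
        ∑ e ∈ Finset.univ \ S, (cp e - cm e) * p e = ∑ e, (cp e - cm e) * p e := by
      rw [add_comm]
      exact Finset.sum_sdiff (Finset.subset_univ S)
    have c4 : (∑ e, (cp e - (cp e - cm e) * p e) * p e) + ∑ e, (cp e - cm e) * p e =
        (∑ e, cp e * p e) + ∑ e, (cp e - cm e) * (p e * (1 - p e)) := by
      rw [← Finset.sum_add_distrib, ← Finset.sum_add_distrib]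
      exact Finset.sum_congr rfl fun e _ => by ring
    linarith [key, hgT₀, hSle, hI1]
  have hZD : 𝓕.inf' h𝓕 (fun T =>
      ⨆ c : {c : E → ℝ // ∀ e, cm e ≤ c e ∧ c e ≤ cp e},
        (∑ e ∈ T, c.1 e) - 𝓕.inf' h𝓕 (fun T' => ∑ e ∈ T', c.1 e)) ≤ 2 * Φ :=
    le_trans (Finset.inf'_le _ hS) hRS
  linarith
end

section
/- The bound Z_R ≥ Z_D/2 is tight: in the instance with two items E = {e₁, e₂}, feasible solutions 𝓕 = {{e₁}, {e₂}}, and cost bounds c^-_e = 0, c^+_e = 1 for both items, the deterministic minmax regret satisfies Z_D = 1 and the randomized minmax regret satisfies Z_R = 1/2. -/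
open Finset

/-- Tightness of `Z_R ≥ Z_D / 2`: in the two-item instance with
`𝓕 = {{e₁},{e₂}}`, `c⁻ ≡ 0` and `c⁺ ≡ 1`, one has `Z_D = 1` and `Z_R = 1/2`. -/
theorem ZR_ZD_gap_tight_interval
    (𝓕 : Finset (Finset (Fin 2)))
    (h𝓕 : 𝓕 = {({0} : Finset (Fin 2)), ({1} : Finset (Fin 2))})
    (h𝓕ne : 𝓕.Nonempty)
    (cm cp : Fin 2 → ℝ)
    (hcm : ∀ e, cm e = 0) (hcp : ∀ e, cp e = 1) :
    (𝓕.inf' h𝓕ne (fun T =>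
      ⨆ c : {c : Fin 2 → ℝ // ∀ e, cm e ≤ c e ∧ c e ≤ cp e},
        (∑ e ∈ T, c.1 e) - 𝓕.inf' h𝓕ne (fun T' => ∑ e ∈ T', c.1 e))) = 1
    ∧
    (⨅ p : (convexHull ℝ
        {x : Fin 2 → ℝ | ∃ T ∈ 𝓕, x = fun e => if e ∈ T then (1 : ℝ) else 0} : Set (Fin 2 → ℝ)),
      𝓕.sup' h𝓕ne (fun T =>
        (∑ e ∈ Finset.univ \ T, cp e * p.1 e) - ∑ e ∈ T, cm e * (1 - p.1 e))) = 1 / 2 := by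
  subst h𝓕
  -- notation for the index type of the sup
  set I := {c : Fin 2 → ℝ // ∀ e, cm e ≤ c e ∧ c e ≤ cp e} with hI
  have hbox : ∀ c : I, ∀ e, (0:ℝ) ≤ c.1 e ∧ c.1 e ≤ 1 := by
    intro c e
    have := c.2 e
    rw [hcm, hcp] at this
    exact this
  -- the inner inf' is min (c 0) (c 1)
  have hinner : ∀ c : I, (({({0}:Finset (Fin 2)), ({1}:Finset (Fin 2))} : Finset (Finset (Fin 2))).inf' h𝓕ne
      (fun T' => ∑ e ∈ T', c.1 e)) = min (c.1 0) (c.1 1) := by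
    intro c
    simp [Finset.inf'_insert, Finset.inf'_singleton]
  -- witnesses
  have hw0 : (∀ e, cm e ≤ (fun j : Fin 2 => if j = 0 then (1:ℝ) else 0) e ∧
      (fun j : Fin 2 => if j = 0 then (1:ℝ) else 0) e ≤ cp e) := by
    intro e; rw [hcm, hcp]; by_cases h : e = 0 <;> simp [h]
  have hw1 : (∀ e, cm e ≤ (fun j : Fin 2 => if j = 1 then (1:ℝ) else 0) e ∧
      (fun j : Fin 2 => if j = 1 then (1:ℝ) else 0) e ≤ cp e) := by
    intro e; rw [hcm, hcp]; by_cases h : e = 1 <;> simp [h]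
  constructor
  · -- deterministic part
    have hsup : ∀ T ∈ ({({0}:Finset (Fin 2)), ({1}:Finset (Fin 2))} : Finset (Finset (Fin 2))),
        (⨆ c : I, (∑ e ∈ T, c.1 e) -
          (({({0}:Finset (Fin 2)), ({1}:Finset (Fin 2))} : Finset (Finset (Fin 2))).inf' h𝓕ne
            (fun T' => ∑ e ∈ T', c.1 e))) = 1 := by
      intro T hT
      have hTcases : T = {0} ∨ T = {1} := by
        simpa using hT
      have hbdd : BddAbove (Set.range fun c : I => (∑ e ∈ T, c.1 e) -
          (({({0}:Finset (Fin 2)), ({1}:Finset (Fin 2))} : Finset (Finset (Fin 2))).inf' h𝓕ne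
            (fun T' => ∑ e ∈ T', c.1 e))) := by
        refine ⟨1, ?_⟩
        rintro x ⟨c, rfl⟩
        beta_reduce
        rw [hinner c]
        have h0 := hbox c 0
        have h1 := hbox c 1
        rcases hTcases with rfl | rfl <;>
          simp only [Finset.sum_singleton] <;>
          rcases min_cases (c.1 0) (c.1 1) with ⟨hm, _⟩ | ⟨hm, _⟩ <;>
          rw [hm] <;> linarith
      have : Nonempty I := ⟨⟨fun j => if j = 0 then (1:ℝ) else 0, hw0⟩⟩
      apply le_antisymm
      · apply ciSup_le
        intro c
        beta_reduce
        rw [hinner c]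
        have h0 := hbox c 0
        have h1 := hbox c 1
        rcases hTcases with rfl | rfl <;>
          simp only [Finset.sum_singleton] <;>
          rcases min_cases (c.1 0) (c.1 1) with ⟨hm, _⟩ | ⟨hm, _⟩ <;>
          rw [hm] <;> linarith
      · rcases hTcases with rfl | rfl
        · have := le_ciSup hbdd (⟨fun j => if j = 0 then (1:ℝ) else 0, hw0⟩ : I)
          refine le_trans (le_of_eq ?_) this
          rw [hinner]
          norm_num
        · have := le_ciSup hbdd (⟨fun j => if j = 1 then (1:ℝ) else 0, hw1⟩ : I)
          refine le_trans (le_of_eq ?_) this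
          rw [hinner]
          norm_num
    rcases h𝓕ne with ⟨T₀, hT₀⟩
    apply le_antisymm
    · exact le_trans (Finset.inf'_le _ hT₀) (le_of_eq (hsup T₀ hT₀))
    · apply Finset.le_inf'
      intro T hT
      exact le_of_eq (hsup T hT).symm
  · -- randomized part
    set a : Fin 2 → ℝ := fun e => if e ∈ ({0} : Finset (Fin 2)) then (1:ℝ) else 0 with ha
    set b : Fin 2 → ℝ := fun e => if e ∈ ({1} : Finset (Fin 2)) then (1:ℝ) else 0 with hb
    have hset : {x : Fin 2 → ℝ | ∃ T ∈ ({({0}:Finset (Fin 2)), ({1}:Finset (Fin 2))} : Finset (Finset (Fin 2))),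
        x = fun e => if e ∈ T then (1 : ℝ) else 0} = {a, b} := by
      ext x
      simp only [Set.mem_setOf_eq, Set.mem_insert_iff, Set.mem_singleton_iff, Finset.mem_insert,
        Finset.mem_singleton]
      constructor
      · rintro ⟨T, (rfl | rfl), rfl⟩
        · left; rfl
        · right; rfl
      · rintro (rfl | rfl)
        · exact ⟨{0}, Or.inl rfl, rfl⟩
        · exact ⟨{1}, Or.inr rfl, rfl⟩
    set S := (convexHull ℝ {x : Fin 2 → ℝ | ∃ T ∈ ({({0}:Finset (Fin 2)), ({1}:Finset (Fin 2))} : Finset (Finset (Fin 2))),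
        x = fun e => if e ∈ T then (1 : ℝ) else 0} : Set (Fin 2 → ℝ)) with hS
    -- the function inside the iInf, simplified
    have hval : ∀ p : S,
        (({({0}:Finset (Fin 2)), ({1}:Finset (Fin 2))} : Finset (Finset (Fin 2))).sup' h𝓕ne
          (fun T => (∑ e ∈ Finset.univ \ T, cp e * p.1 e) - ∑ e ∈ T, cm e * (1 - p.1 e)))
        = max (p.1 1) (p.1 0) := by
      intro p
      have h0 : (Finset.univ \ ({0} : Finset (Fin 2))) = {1} := by decide
      have h1 : (Finset.univ \ ({1} : Finset (Fin 2))) = {0} := by decide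
      simp [Finset.sup'_insert, Finset.sup'_singleton, h0, h1, hcm, hcp]
    -- every point of the hull has p0 + p1 = 1 and nonneg coordinates
    have hrep : ∀ p : S, 0 ≤ p.1 0 ∧ 0 ≤ p.1 1 ∧ p.1 0 + p.1 1 = 1 := by
      rintro ⟨p, hp⟩
      rw [hS, hset, convexHull_pair, segment_eq_image] at hp
      obtain ⟨θ, ⟨hθ0, hθ1⟩, rfl⟩ := hp
      have hA : a 0 = 1 ∧ a 1 = 0 := by constructor <;> norm_num [ha]
      have hB : b 0 = 0 ∧ b 1 = 1 := by constructor <;> norm_num [hb]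
      simp only [Pi.add_apply, Pi.smul_apply, smul_eq_mul, hA.1, hA.2, hB.1, hB.2]
      constructor
      · nlinarith
      constructor
      · nlinarith
      · ring
    -- lower bound 1/2 for every point
    have hlb : ∀ p : S, (1:ℝ)/2 ≤ max (p.1 1) (p.1 0) := by
      intro p
      obtain ⟨h0, h1, hsum⟩ := hrep p
      rcases max_cases (p.1 1) (p.1 0) with ⟨hm, hle⟩ | ⟨hm, hle⟩ <;> rw [hm] <;> linarith
    -- the midpoint is in the hull
    have hmid : (fun _ : Fin 2 => (1:ℝ)/2) ∈ S := by
      rw [hS, hset]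
      have haS : a ∈ ({a, b} : Set (Fin 2 → ℝ)) := Set.mem_insert _ _
      have hbS : b ∈ ({a, b} : Set (Fin 2 → ℝ)) := Set.mem_insert_of_mem _ rfl
      have := (convex_convexHull ℝ ({a, b} : Set (Fin 2 → ℝ)))
        (subset_convexHull ℝ _ haS) (subset_convexHull ℝ _ hbS)
        (by norm_num : (0:ℝ) ≤ 1/2) (by norm_num : (0:ℝ) ≤ 1/2) (by norm_num)
      convert this using 1
      funext e
      fin_cases e <;> norm_num [ha, hb]
    have : Nonempty S := ⟨⟨_, hmid⟩⟩
    apply le_antisymm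
    · have hle := ciInf_le (f := fun p : S =>
        (({({0}:Finset (Fin 2)), ({1}:Finset (Fin 2))} : Finset (Finset (Fin 2))).sup' h𝓕ne
          (fun T => (∑ e ∈ Finset.univ \ T, cp e * p.1 e) - ∑ e ∈ T, cm e * (1 - p.1 e))))
        (⟨1/2, by rintro x ⟨p, rfl⟩; exact le_trans (hlb p) (le_of_eq (hval p).symm)⟩)
        (⟨_, hmid⟩ : S)
      refine le_trans hle (le_of_eq ?_)
      rw [hval]
      norm_num
    · apply le_ciInf
      intro p
      exact le_trans (hlb p) (le_of_eq (hval p).symm)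
end
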